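/- arXiv:2108.10594 — 4 statements merged into one kernel-verified Lean document; each statement's English description precedes it below -/
import Mathlib

section
/- For every round t ≥ 0, every focal action A ∈ {C,D}, every x ∈ {0,…,k} and every y ∈ {0,…,n−1−k}, the clustered distribution after t steps of the reduced chain equals the aggregated full-chain distribution: (μ(0) (M')^t)_{(A,x,y)} = Σ_{h ∈ A_{Axy}} (v(0) M^t)_h. -/
open Finset Matrix
open scoped Classical

noncomputable section

/-- A memory-1 strategy: an initial cooperation probability `init` and conditional
cooperation probabilities `cond A j`: the probability to cooperate in the next round
when one's own action in the current round was `A` (`true` = cooperate) and exactly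
`j` co-players cooperated. -/
structure Mem1 where
  init : ℝ
  cond : Bool → ℕ → ℝ

/-- All entries of the strategy lie in `[0,1]`. -/
def Mem1.valid (p : Mem1) : Prop :=
  p.init ∈ Set.Icc (0:ℝ) 1 ∧ ∀ A j, p.cond A j ∈ Set.Icc (0:ℝ) 1

/-- A full state: the action of each of the `n` players (`true` = cooperate). -/
abbrev FullState (n : ℕ) := Fin n → Bool

/-- The number of cooperators `σ(h)` in a full state. -/
def nCoop {n : ℕ} (h : FullState n) : ℕ :=
  (Finset.univ.filter fun i => h i = true).card

/-- The full transition matrix `M` on the `2^n` full states, given each player's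
memory-1 strategy: `m_{h,h'} = ∏ i u_i`, where `u_i` is player `i`'s probability of
choosing action `h' i` given that in state `h` his action was `h i` and
`σ(h) - f(h i)` of his co-players cooperated. -/
def fullM {n : ℕ} (strat : Fin n → Mem1) : Matrix (FullState n) (FullState n) ℝ :=
  Matrix.of fun h h' => ∏ i,
    (if h' i then (strat i).cond (h i) (nCoop h - if h i then 1 else 0)
     else 1 - (strat i).cond (h i) (nCoop h - if h i then 1 else 0))

/-- The initial full-state distribution `v(0)`: each player cooperates independently
with the initial probability of his own strategy, `v(0)_h = ∏ i |1 - f(A_i) - p^i_0|`. -/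
def fullInit {n : ℕ} (strat : Fin n → Mem1) : FullState n → ℝ :=
  fun h => ∏ i, |1 - (if h i then (1:ℝ) else 0) - (strat i).init|

/-- Binomial transfer factor: for a block of `tot` co-players of one strategy of which
`x` cooperated in the last round, the probability that exactly `x'` of them cooperate
in the next round, where previous cooperators cooperate with probability `pc` and
previous defectors with probability `pd`:
`Σ_{j=0}^{x'} C(x,j) pc^j (1-pc)^{x-j} C(tot-x, x'-j) pd^{x'-j} (1-pd)^{(tot-x)-(x'-j)}`. -/
def transfer (pc pd : ℝ) (x tot x' : ℕ) : ℝ :=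
  ∑ j ∈ Finset.range (x' + 1),
    (x.choose j : ℝ) * pc ^ j * (1 - pc) ^ (x - j) *
    ((tot - x).choose (x' - j) : ℝ) * pd ^ (x' - j) * (1 - pd) ^ ((tot - x) - (x' - j))

/-- The discounted mean distribution `(1-δ) Σ_{t=0}^∞ δ^t (w₀ T^t)`. -/
def discMean {α : Type*} [Fintype α] [DecidableEq α]
    (δ : ℝ) (w0 : α → ℝ) (T : Matrix α α ℝ) : α → ℝ :=
  fun j => (1 - δ) * ∑' t : ℕ, δ ^ t * (w0 ᵥ* T ^ t) j

/-- The focal player's one-round payoff in full state `h`: `a_{σ(h)-1}` if he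
cooperates, `b_{σ(h)}` if he defects. -/
def focalPayoff {n : ℕ} (focal : Fin n) (a b : ℕ → ℝ) (h : FullState n) : ℝ :=
  if h focal then a (nCoop h - 1) else b (nCoop h)

/-- Strategy assignment for two strategies: `assign i = true` means player `i` uses `p`,
otherwise player `i` uses `q`. -/
def strat2 {n : ℕ} (p q : Mem1) (assign : Fin n → Bool) : Fin n → Mem1 :=
  fun i => if assign i then p else q

/-- The cluster `A_{Axy}`: full states in which the focal player plays `A`, exactly `x`
of the `p`-co-players cooperate, and exactly `y` of the `q`-co-players cooperate. -/
def cluster {n : ℕ} (focal : Fin n) (assign : Fin n → Bool) (A : Bool) (x y : ℕ) :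
    Finset (FullState n) :=
  Finset.univ.filter fun h =>
    h focal = A ∧
    (Finset.univ.filter fun i => i ≠ focal ∧ assign i = true ∧ h i = true).card = x ∧
    (Finset.univ.filter fun i => i ≠ focal ∧ assign i = false ∧ h i = true).card = y

/-- The reduced transition matrix `M'` on the `2(k+1)(n-k)` clustered states `(A,x,y)`
with `A ∈ {C,D}`, `x ∈ {0,…,k}`, `y ∈ {0,…,n-1-k}`, for a focal player using `p`. -/
def redM (n k : ℕ) (p q : Mem1) :
    Matrix (Bool × Fin (k+1) × Fin (n-k)) (Bool × Fin (k+1) × Fin (n-k)) ℝ :=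
  Matrix.of fun s s' =>
    match s, s' with
    | (A, x, y), (A', x', y') =>
      |1 - (if A' then (1:ℝ) else 0) - p.cond A ((x:ℕ) + (y:ℕ))| *
      transfer (p.cond true ((x:ℕ) + (y:ℕ) + (if A then 1 else 0) - 1))
               (p.cond false ((x:ℕ) + (y:ℕ) + (if A then 1 else 0))) (x:ℕ) k (x':ℕ) *
      transfer (q.cond true ((x:ℕ) + (y:ℕ) + (if A then 1 else 0) - 1))
               (q.cond false ((x:ℕ) + (y:ℕ) + (if A then 1 else 0))) (y:ℕ) (n-1-k) (y':ℕ)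

/-- The initial clustered distribution `μ(0)`. -/
def redInit (n k : ℕ) (p q : Mem1) : Bool × Fin (k+1) × Fin (n-k) → ℝ :=
  fun s => match s with
  | (A, x, y) =>
    |1 - (if A then (1:ℝ) else 0) - p.init| *
    ((k.choose (x:ℕ) : ℝ) * p.init ^ (x:ℕ) * (1 - p.init) ^ (k - (x:ℕ))) *
    (((n-1-k).choose (y:ℕ) : ℝ) * q.init ^ (y:ℕ) * (1 - q.init) ^ ((n-1-k) - (y:ℕ)))

section PowersetAux
variable {ι : Type*} [DecidableEq ι]

lemma sum_powerset_split (S C : Finset ι) (hC : C ⊆ S) (f : Finset ι → ℝ) :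
    ∑ T ∈ S.powerset, f T = ∑ P ∈ C.powerset ×ˢ (S \ C).powerset, f (P.1 ∪ P.2) := by
  refine Finset.sum_nbij' (fun T => (T ∩ C, T \ C)) (fun P => P.1 ∪ P.2) ?_ ?_ ?_ ?_ ?_
  · intro T hT
    simp only [mem_powerset] at hT
    simp only [mem_product, mem_powerset]
    exact ⟨inter_subset_right, sdiff_subset_sdiff hT le_rfl⟩
  · intro P hP
    simp only [mem_product, mem_powerset] at hP
    simp only [mem_powerset]
    exact union_subset (hP.1.trans hC) (hP.2.trans sdiff_subset)
  · intro T hT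
    ext a; simp only [mem_union, mem_inter, mem_sdiff]; tauto
  · intro P hP
    simp only [mem_product, mem_powerset] at hP
    have h1 : (P.1 ∪ P.2) ∩ C = P.1 := by
      ext a
      simp only [mem_inter, mem_union]
      constructor
      · rintro ⟨ha | ha, hc⟩
        · exact ha
        · exact absurd hc (mem_sdiff.mp (hP.2 ha)).2
      · intro ha; exact ⟨Or.inl ha, hP.1 ha⟩
    have h2 : (P.1 ∪ P.2) \ C = P.2 := by
      ext a
      simp only [mem_sdiff, mem_union]
      constructor
      · rintro ⟨ha | ha, hc⟩
        · exact absurd (hP.1 ha) hc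
        · exact ha
      · intro ha; exact ⟨Or.inr ha, (mem_sdiff.mp (hP.2 ha)).2⟩
    exact Prod.ext h1 h2
  · intro T hT
    congr 1
    ext a; simp only [mem_union, mem_inter, mem_sdiff]; tauto

lemma prod_ite_mem' (S T : Finset ι) (hT : T ⊆ S) (a b : ℝ) :
    ∏ i ∈ S, (if i ∈ T then a else b) = a ^ T.card * b ^ (S.card - T.card) := by
  rw [Finset.prod_ite, Finset.prod_const, Finset.prod_const]
  congr 2
  · rw [Finset.filter_mem_eq_inter, inter_comm, (inter_eq_left).mpr hT]
  · rw [← Finset.card_sdiff_of_subset hT]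
    congr 1
    ext i; simp only [mem_filter, mem_sdiff]

lemma sum_powersetCard_const (S : Finset ι) (c : ℕ) (r : ℝ) :
    ∑ _T ∈ S.powersetCard c, r = (S.card.choose c : ℝ) * r := by
  rw [Finset.sum_const, card_powersetCard, nsmul_eq_mul]

lemma block_eval (S C : Finset ι) (hC : C ⊆ S) (pc pd : ℝ) (c : ℕ) :
    ∑ T ∈ S.powersetCard c, ∏ i ∈ S,
      (if i ∈ T then (if i ∈ C then pc else pd) else (if i ∈ C then 1 - pc else 1 - pd))
    = transfer pc pd C.card S.card c := by
  set L : ℕ := (S \ C).card with hL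
  have hLS : S.card - C.card = L := by rw [hL, card_sdiff_of_subset hC]
  -- step 1: factor the product
  have hprod : ∀ T ∈ S.powersetCard c, ∏ i ∈ S,
      (if i ∈ T then (if i ∈ C then pc else pd) else (if i ∈ C then 1 - pc else 1 - pd))
      = (pc ^ (T ∩ C).card * (1 - pc) ^ (C.card - (T ∩ C).card)) *
        (pd ^ (T \ C).card * (1 - pd) ^ (L - (T \ C).card)) := by
    intro T hT
    rw [mem_powersetCard] at hT
    have hSU : S = C ∪ (S \ C) := by rw [union_sdiff_of_subset hC]
    rw [hSU, prod_union disjoint_sdiff]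
    congr 1
    · rw [← prod_ite_mem' C (T ∩ C) inter_subset_right pc (1 - pc)]
      apply prod_congr rfl
      intro i hi
      simp [hi, mem_inter]
    · rw [← prod_ite_mem' (S \ C) (T \ C) (sdiff_subset_sdiff hT.1 le_rfl) pd (1 - pd)]
      apply prod_congr rfl
      intro i hi
      rw [mem_sdiff] at hi
      simp [hi.1, hi.2, mem_sdiff]
  rw [Finset.sum_congr rfl hprod]
  -- step 2: go to powerset with an indicator, then split
  rw [powersetCard_eq_filter, Finset.sum_filter, sum_powerset_split S C hC,
    Finset.sum_product]
  -- step 3: simplify each pair summand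
  have hpair : ∀ T1 ∈ C.powerset, ∀ T2 ∈ (S \ C).powerset,
      (if (T1 ∪ T2).card = c then
        (pc ^ ((T1 ∪ T2) ∩ C).card * (1 - pc) ^ (C.card - ((T1 ∪ T2) ∩ C).card)) *
        (pd ^ ((T1 ∪ T2) \ C).card * (1 - pd) ^ (L - ((T1 ∪ T2) \ C).card)) else 0)
      = (if T1.card + T2.card = c then
          (pc ^ T1.card * (1 - pc) ^ (C.card - T1.card)) *
          (pd ^ T2.card * (1 - pd) ^ (L - T2.card)) else 0) := by
    intro T1 h1 T2 h2
    rw [mem_powerset] at h1 h2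
    have hd : Disjoint T1 T2 := Finset.disjoint_left.mpr fun a ha ha2 =>
      (mem_sdiff.mp (h2 ha2)).2 (h1 ha)
    have e1 : (T1 ∪ T2) ∩ C = T1 := by
      ext a; simp only [mem_inter, mem_union]
      constructor
      · rintro ⟨ha | ha, hc⟩
        · exact ha
        · exact absurd hc (mem_sdiff.mp (h2 ha)).2
      · intro ha; exact ⟨Or.inl ha, h1 ha⟩
    have e2 : (T1 ∪ T2) \ C = T2 := by
      ext a; simp only [mem_sdiff, mem_union]
      constructor
      · rintro ⟨ha | ha, hc⟩
        · exact absurd (h1 ha) hc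
        · exact ha
      · intro ha; exact ⟨Or.inr ha, (mem_sdiff.mp (h2 ha)).2⟩
    rw [card_union_of_disjoint hd, e1, e2]
  refine Eq.trans (Finset.sum_congr rfl
    (fun T1 h1 => Finset.sum_congr rfl (fun T2 h2 => hpair T1 h1 T2 h2))) ?_
  -- step 4: group by cardinalities
  have hout : ∀ T1 ∈ C.powerset,
      (∑ T2 ∈ (S \ C).powerset, if T1.card + T2.card = c then
          (pc ^ T1.card * (1 - pc) ^ (C.card - T1.card)) *
          (pd ^ T2.card * (1 - pd) ^ (L - T2.card)) else 0)
      = (if T1.card ≤ c ∧ c - T1.card ≤ L then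
          (pc ^ T1.card * (1 - pc) ^ (C.card - T1.card)) *
          ((L.choose (c - T1.card) : ℝ) * pd ^ (c - T1.card) * (1 - pd) ^ (L - (c - T1.card)))
         else 0) := by
    intro T1 _
    rw [Finset.sum_powerset]
    have : ∀ m ∈ Finset.range (L + 1),
        (∑ T2 ∈ (S \ C).powersetCard m, if T1.card + T2.card = c then
          (pc ^ T1.card * (1 - pc) ^ (C.card - T1.card)) *
          (pd ^ T2.card * (1 - pd) ^ (L - T2.card)) else 0)
        = (if T1.card + m = c then (L.choose m : ℝ) *
            ((pc ^ T1.card * (1 - pc) ^ (C.card - T1.card)) *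
             (pd ^ m * (1 - pd) ^ (L - m))) else 0) := by
      intro m _
      have : ∀ T2 ∈ (S \ C).powersetCard m,
          (if T1.card + T2.card = c then
            (pc ^ T1.card * (1 - pc) ^ (C.card - T1.card)) *
            (pd ^ T2.card * (1 - pd) ^ (L - T2.card)) else 0)
          = (if T1.card + m = c then
            (pc ^ T1.card * (1 - pc) ^ (C.card - T1.card)) *
            (pd ^ m * (1 - pd) ^ (L - m)) else 0) := by
        intro T2 h2
        rw [mem_powersetCard] at h2
        rw [h2.2]
      rw [Finset.sum_congr rfl this, sum_powersetCard_const]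
      split
      · ring
      · ring
    rw [Finset.sum_congr rfl this]
    -- sum over m of indicator m = c - T1.card
    have hiff : ∀ m, (T1.card + m = c) ↔ (m = c - T1.card ∧ T1.card ≤ c) := by
      intro m; omega
    have : ∀ m ∈ Finset.range (L + 1),
        (if T1.card + m = c then (L.choose m : ℝ) *
            ((pc ^ T1.card * (1 - pc) ^ (C.card - T1.card)) *
             (pd ^ m * (1 - pd) ^ (L - m))) else 0)
        = (if m = c - T1.card then
            (if T1.card ≤ c then (L.choose m : ℝ) *
            ((pc ^ T1.card * (1 - pc) ^ (C.card - T1.card)) *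
             (pd ^ m * (1 - pd) ^ (L - m))) else 0) else 0) := by
      intro m _
      by_cases h : T1.card + m = c
      · rw [if_pos h, if_pos ((hiff m).mp h).1, if_pos ((hiff m).mp h).2]
      · rw [if_neg h]
        by_cases h1 : m = c - T1.card
        · rw [if_pos h1]
          have : ¬ T1.card ≤ c := by omega
          rw [if_neg this]
        · rw [if_neg h1]
    rw [Finset.sum_congr rfl this, Finset.sum_ite_eq' (Finset.range (L+1)) (c - T1.card)]
    simp only [Finset.mem_range]
    by_cases hc1 : c - T1.card < L + 1
    · rw [if_pos hc1]
      by_cases hc2 : T1.card ≤ c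
      · rw [if_pos hc2, if_pos ⟨hc2, by omega⟩]; ring
      · rw [if_neg hc2, if_neg (by tauto)]
    · rw [if_neg hc1, if_neg (by intro h; omega)]
  rw [Finset.sum_congr rfl hout]
  -- step 5: group T1 by cardinality
  rw [Finset.sum_powerset]
  have : ∀ j ∈ Finset.range (C.card + 1),
      (∑ T1 ∈ C.powersetCard j, if T1.card ≤ c ∧ c - T1.card ≤ L then
          (pc ^ T1.card * (1 - pc) ^ (C.card - T1.card)) *
          ((L.choose (c - T1.card) : ℝ) * pd ^ (c - T1.card) * (1 - pd) ^ (L - (c - T1.card)))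
         else 0)
      = (C.card.choose j : ℝ) * (if j ≤ c ∧ c - j ≤ L then
          (pc ^ j * (1 - pc) ^ (C.card - j)) *
          ((L.choose (c - j) : ℝ) * pd ^ (c - j) * (1 - pd) ^ (L - (c - j))) else 0) := by
    intro j _
    have : ∀ T1 ∈ C.powersetCard j,
        (if T1.card ≤ c ∧ c - T1.card ≤ L then
          (pc ^ T1.card * (1 - pc) ^ (C.card - T1.card)) *
          ((L.choose (c - T1.card) : ℝ) * pd ^ (c - T1.card) * (1 - pd) ^ (L - (c - T1.card)))
         else 0)
        = (if j ≤ c ∧ c - j ≤ L then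
          (pc ^ j * (1 - pc) ^ (C.card - j)) *
          ((L.choose (c - j) : ℝ) * pd ^ (c - j) * (1 - pd) ^ (L - (c - j))) else 0) := by
      intro T1 h1
      rw [mem_powersetCard] at h1
      rw [h1.2]
    rw [Finset.sum_congr rfl this, sum_powersetCard_const]
  rw [Finset.sum_congr rfl this]
  -- step 6: compare with transfer
  rw [transfer, hLS]
  -- both sides are sums of `term j` over suitable ranges
  have key : ∀ N, (C.card + 1 ≤ N) → (c + 1 ≤ N) →
      (∑ j ∈ Finset.range (C.card + 1), (C.card.choose j : ℝ) * (if j ≤ c ∧ c - j ≤ L then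
          (pc ^ j * (1 - pc) ^ (C.card - j)) *
          ((L.choose (c - j) : ℝ) * pd ^ (c - j) * (1 - pd) ^ (L - (c - j))) else 0))
      = ∑ j ∈ Finset.range (c + 1),
          (C.card.choose j : ℝ) * pc ^ j * (1 - pc) ^ (C.card - j) *
          (L.choose (c - j) : ℝ) * pd ^ (c - j) * (1 - pd) ^ (L - (c - j)) := by
    intro N hN1 hN2
    have lhs_eq : (∑ j ∈ Finset.range (C.card + 1), (C.card.choose j : ℝ) * (if j ≤ c ∧ c - j ≤ L then
          (pc ^ j * (1 - pc) ^ (C.card - j)) *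
          ((L.choose (c - j) : ℝ) * pd ^ (c - j) * (1 - pd) ^ (L - (c - j))) else 0))
        = ∑ j ∈ Finset.range N, (if j ≤ C.card ∧ j ≤ c ∧ c - j ≤ L then
          (C.card.choose j : ℝ) * pc ^ j * (1 - pc) ^ (C.card - j) *
          (L.choose (c - j) : ℝ) * pd ^ (c - j) * (1 - pd) ^ (L - (c - j)) else 0) := by
      rw [← Finset.sum_subset (Finset.range_subset_range.mpr hN1)]
      · apply Finset.sum_congr rfl
        intro j hj
        rw [Finset.mem_range] at hj
        by_cases h : j ≤ c ∧ c - j ≤ L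
        · rw [if_pos h, if_pos ⟨by omega, h⟩]; ring
        · rw [if_neg h, if_neg (by tauto), mul_zero]
      · intro j _ hj
        rw [Finset.mem_range, not_lt] at hj
        rw [if_neg (by omega)]
    have rhs_eq : (∑ j ∈ Finset.range (c + 1),
          (C.card.choose j : ℝ) * pc ^ j * (1 - pc) ^ (C.card - j) *
          (L.choose (c - j) : ℝ) * pd ^ (c - j) * (1 - pd) ^ (L - (c - j)))
        = ∑ j ∈ Finset.range N, (if j ≤ C.card ∧ j ≤ c ∧ c - j ≤ L then
          (C.card.choose j : ℝ) * pc ^ j * (1 - pc) ^ (C.card - j) *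
          (L.choose (c - j) : ℝ) * pd ^ (c - j) * (1 - pd) ^ (L - (c - j)) else 0) := by
      rw [← Finset.sum_subset (Finset.range_subset_range.mpr hN2)]
      · apply Finset.sum_congr rfl
        intro j hj
        rw [Finset.mem_range] at hj
        by_cases h : j ≤ C.card ∧ c - j ≤ L
        · rw [if_pos ⟨h.1, by omega, h.2⟩]
        · rw [if_neg (by tauto)]
          rcases not_and_or.mp h with h' | h'
          · have : C.card.choose j = 0 := Nat.choose_eq_zero_of_lt (by omega)
            rw [this]; push_cast; ring
          · have : L.choose (c - j) = 0 := Nat.choose_eq_zero_of_lt (by omega)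
            rw [this]; push_cast; ring
      · intro j _ hj
        rw [Finset.mem_range, not_lt] at hj
        rw [if_neg (by omega)]
    rw [lhs_eq, rhs_eq]
  exact key (max (C.card + 1) (c + 1)) (le_max_left _ _) (le_max_right _ _)

end PowersetAux

/-! ### Auxiliary machinery for the clustering proof -/

section ClusterAux

variable {n : ℕ} (focal : Fin n) (assign : Fin n → Bool)

/-- The set of `p`-co-players. -/
def pSet : Finset (Fin n) := Finset.univ.filter fun i => i ≠ focal ∧ assign i = true

/-- The set of `q`-co-players. -/
def qSet : Finset (Fin n) := Finset.univ.filter fun i => i ≠ focal ∧ assign i = false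

lemma focal_not_mem_union : focal ∉ pSet focal assign ∪ qSet focal assign := by
  simp [pSet, qSet]

lemma pq_disjoint : Disjoint (pSet focal assign) (qSet focal assign) := by
  rw [Finset.disjoint_left]
  intro a ha hb
  simp only [pSet, qSet, mem_filter] at ha hb
  rw [ha.2.2] at hb
  exact absurd hb.2.2 (by simp)

lemma univ_eq_insert : (Finset.univ : Finset (Fin n)) =
    insert focal (pSet focal assign ∪ qSet focal assign) := by
  ext i
  simp only [mem_univ, mem_insert, mem_union, pSet, qSet, mem_filter, true_and, true_iff]
  by_cases hi : i = focal
  · exact Or.inl hi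
  · cases hb : assign i
    · exact Or.inr (Or.inr ⟨hi, rfl⟩)
    · exact Or.inr (Or.inl ⟨hi, rfl⟩)

lemma mem_cluster_iff (h : FullState n) (A : Bool) (x y : ℕ) :
    h ∈ cluster focal assign A x y ↔
      h focal = A ∧ ((pSet focal assign).filter (fun i => h i = true)).card = x ∧
        ((qSet focal assign).filter (fun i => h i = true)).card = y := by
  simp only [cluster, mem_filter, mem_univ, true_and, pSet, qSet, filter_filter, and_assoc]

lemma nCoop_of_cluster (h : FullState n) (A : Bool) (x y : ℕ)
    (hh : h ∈ cluster focal assign A x y) :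
    nCoop h = x + y + (if A then 1 else 0) := by
  rw [mem_cluster_iff] at hh
  obtain ⟨hA, hx, hy⟩ := hh
  rw [nCoop, univ_eq_insert focal assign, filter_insert, filter_union]
  have hdisj : Disjoint ((pSet focal assign).filter (fun i => h i = true))
      ((qSet focal assign).filter (fun i => h i = true)) :=
    (pq_disjoint focal assign).mono (filter_subset _ _) (filter_subset _ _)
  have hnm : focal ∉ (pSet focal assign).filter (fun i => h i = true) ∪
      (qSet focal assign).filter (fun i => h i = true) := by
    intro hc
    exact focal_not_mem_union focal assign
      (Finset.union_subset_union (filter_subset _ _) (filter_subset _ _) hc)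
  by_cases hAv : A = true
  · rw [if_pos (hA.trans hAv), Finset.card_insert_of_notMem hnm,
      card_union_of_disjoint hdisj, hx, hy, hAv]
    simp
  · have : A = false := by simpa using hAv
    rw [this] at hA
    rw [if_neg (by simp [hA]), card_union_of_disjoint hdisj, hx, hy, this]
    simp

/-- Factorization of a sum over a cluster of a product over all players. -/
lemma cluster_sum (g : Fin n → Bool → ℝ) (A : Bool) (x y : ℕ) :
    ∑ h ∈ cluster focal assign A x y, ∏ i, g i (h i)
      = g focal A *
        (∑ T ∈ (pSet focal assign).powersetCard x,
          ∏ i ∈ pSet focal assign, (if i ∈ T then g i true else g i false)) *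
        (∑ T ∈ (qSet focal assign).powersetCard y,
          ∏ i ∈ qSet focal assign, (if i ∈ T then g i true else g i false)) := by
  rw [mul_assoc, Finset.sum_mul_sum, ← Finset.sum_product', Finset.mul_sum]
  refine Finset.sum_nbij'
    (fun h => ((pSet focal assign).filter (fun i => h i = true),
               (qSet focal assign).filter (fun i => h i = true)))
    (fun P => fun i => if i = focal then A else decide (i ∈ P.1 ∪ P.2)) ?_ ?_ ?_ ?_ ?_
  · intro h hh
    rw [mem_cluster_iff] at hh
    simp only [mem_product, mem_powersetCard]
    exact ⟨⟨filter_subset _ _, hh.2.1⟩, ⟨filter_subset _ _, hh.2.2⟩⟩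
  · intro P hP
    simp only [mem_product, mem_powersetCard] at hP
    rw [mem_cluster_iff]
    refine ⟨by simp, ?_, ?_⟩
    · rw [← hP.1.2]
      congr 1
      ext i
      simp only [mem_filter, pSet, mem_univ, true_and]
      constructor
      · rintro ⟨⟨hif, hia⟩, hd⟩
        rw [if_neg hif] at hd
        rcases Finset.mem_union.mp (of_decide_eq_true hd) with hm | hm
        · exact hm
        · have := hP.2.1 hm
          simp only [qSet, mem_filter, mem_univ, true_and] at this
          rw [hia] at this
          exact absurd this.2 (by simp)
      · intro hi
        have hps := hP.1.1 hi
        simp only [pSet, mem_filter, mem_univ, true_and] at hps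
        refine ⟨hps, ?_⟩
        rw [if_neg hps.1]
        exact decide_eq_true (Finset.mem_union_left _ hi)
    · rw [← hP.2.2]
      congr 1
      ext i
      simp only [mem_filter, qSet, mem_univ, true_and]
      constructor
      · rintro ⟨⟨hif, hia⟩, hd⟩
        rw [if_neg hif] at hd
        rcases Finset.mem_union.mp (of_decide_eq_true hd) with hm | hm
        · have := hP.1.1 hm
          simp only [pSet, mem_filter, mem_univ, true_and] at this
          rw [hia] at this
          exact absurd this.2 (by simp)
        · exact hm
      · intro hi
        have hqs := hP.2.1 hi
        simp only [qSet, mem_filter, mem_univ, true_and] at hqs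
        refine ⟨hqs, ?_⟩
        rw [if_neg hqs.1]
        exact decide_eq_true (Finset.mem_union_right _ hi)
  · intro h hh
    rw [mem_cluster_iff] at hh
    funext i
    dsimp only
    by_cases hif : i = focal
    · rw [hif, if_pos rfl, hh.1]
    · rw [if_neg hif]
      have hiu : i ∈ pSet focal assign ∪ qSet focal assign := by
        have : i ∈ (Finset.univ : Finset (Fin n)) := mem_univ i
        rw [univ_eq_insert focal assign] at this
        rcases Finset.mem_insert.mp this with h' | h'
        · exact absurd h' hif
        · exact h'
      by_cases hc : h i = true
      · rw [hc]
        apply decide_eq_true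
        rcases Finset.mem_union.mp hiu with hm | hm
        · exact Finset.mem_union_left _ (mem_filter.mpr ⟨hm, hc⟩)
        · exact Finset.mem_union_right _ (mem_filter.mpr ⟨hm, hc⟩)
      · have hcf : h i = false := by simpa using hc
        rw [hcf]
        apply decide_eq_false
        intro hm
        rcases Finset.mem_union.mp hm with hm' | hm'
        · exact hc (mem_filter.mp hm').2
        · exact hc (mem_filter.mp hm').2
  · intro P hP
    simp only [mem_product, mem_powersetCard] at hP
    have e1 : (pSet focal assign).filter
        (fun i => (if i = focal then A else decide (i ∈ P.1 ∪ P.2)) = true) = P.1 := by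
      ext i
      simp only [mem_filter]
      constructor
      · rintro ⟨hips, hd⟩
        have hif : i ≠ focal := by
          intro hc; exact absurd (hc ▸ hips)
            (fun hm => focal_not_mem_union focal assign (Finset.mem_union_left _ hm))
        rw [if_neg hif] at hd
        rcases Finset.mem_union.mp (of_decide_eq_true hd) with hm | hm
        · exact hm
        · exact absurd hips (Finset.disjoint_right.mp (pq_disjoint focal assign) (hP.2.1 hm))
      · intro hi
        have hips := hP.1.1 hi
        have hif : i ≠ focal := fun hc => focal_not_mem_union focal assign
          (Finset.mem_union_left _ (hc ▸ hips))
        exact ⟨hips, by rw [if_neg hif]; exact decide_eq_true (Finset.mem_union_left _ hi)⟩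
    have e2 : (qSet focal assign).filter
        (fun i => (if i = focal then A else decide (i ∈ P.1 ∪ P.2)) = true) = P.2 := by
      ext i
      simp only [mem_filter]
      constructor
      · rintro ⟨hiqs, hd⟩
        have hif : i ≠ focal := by
          intro hc; exact absurd (hc ▸ hiqs)
            (fun hm => focal_not_mem_union focal assign (Finset.mem_union_right _ hm))
        rw [if_neg hif] at hd
        rcases Finset.mem_union.mp (of_decide_eq_true hd) with hm | hm
        · exact absurd hiqs (Finset.disjoint_left.mp (pq_disjoint focal assign) (hP.1.1 hm))
        · exact hm
      · intro hi
        have hiqs := hP.2.1 hi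
        have hif : i ≠ focal := fun hc => focal_not_mem_union focal assign
          (Finset.mem_union_right _ (hc ▸ hiqs))
        exact ⟨hiqs, by rw [if_neg hif]; exact decide_eq_true (Finset.mem_union_right _ hi)⟩
    exact Prod.ext e1 e2
  · intro h hh
    rw [mem_cluster_iff] at hh
    rw [univ_eq_insert focal assign,
      Finset.prod_insert (focal_not_mem_union focal assign),
      Finset.prod_union (pq_disjoint focal assign), hh.1]
    congr 1
    congr 1
    · apply Finset.prod_congr rfl
      intro i hi
      dsimp only
      by_cases hc : h i = true
      · rw [if_pos (mem_filter.mpr ⟨hi, hc⟩), hc]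
      · have hcf : h i = false := by simpa using hc
        have hnm : i ∉ filter (fun j => h j = true) (pSet focal assign) :=
          fun hm => hc (mem_filter.mp hm).2
        rw [if_neg hnm, hcf]
    · apply Finset.prod_congr rfl
      intro i hi
      dsimp only
      by_cases hc : h i = true
      · rw [if_pos (mem_filter.mpr ⟨hi, hc⟩), hc]
      · have hcf : h i = false := by simpa using hc
        have hnm : i ∉ filter (fun j => h j = true) (qSet focal assign) :=
          fun hm => hc (mem_filter.mp hm).2
        rw [if_neg hnm, hcf]

end ClusterAux


section MainAux

variable {n : ℕ} (focal : Fin n) (assign : Fin n → Bool)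

lemma init_cluster_sum (k : ℕ) (p q : Mem1) (hp : p.valid) (hq : q.valid)
    (hassign : assign focal = true)
    (hpcard : (pSet focal assign).card = k) (hqcard : (qSet focal assign).card = n - 1 - k)
    (A : Bool) (x y : ℕ) :
    ∑ h ∈ cluster focal assign A x y, fullInit (strat2 p q assign) h
      = |1 - (if A then (1:ℝ) else 0) - p.init| *
        ((k.choose x : ℝ) * p.init ^ x * (1 - p.init) ^ (k - x)) *
        (((n-1-k).choose y : ℝ) * q.init ^ y * (1 - q.init) ^ ((n-1-k) - y)) := by
  have hval : ∀ i, 0 ≤ (strat2 p q assign i).init ∧ (strat2 p q assign i).init ≤ 1 := by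
    intro i
    unfold strat2
    by_cases ha : assign i = true
    · rw [if_pos ha]; exact ⟨hp.1.1, hp.1.2⟩
    · rw [if_neg ha]; exact ⟨hq.1.1, hq.1.2⟩
  have habs : ∀ i (b : Bool), |1 - (if b then (1:ℝ) else 0) - (strat2 p q assign i).init|
      = if b then (strat2 p q assign i).init else 1 - (strat2 p q assign i).init := by
    intro i b
    obtain ⟨h0, h1⟩ := hval i
    cases b
    · simp only [Bool.false_eq_true, if_false]
      rw [sub_zero, abs_of_nonneg (by linarith)]
    · simp only [↓reduceIte]
      rw [show (1:ℝ) - 1 - (strat2 p q assign i).init = -((strat2 p q assign i).init) by ring,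
        abs_neg, abs_of_nonneg h0]
  have hrw : ∀ h ∈ cluster focal assign A x y, fullInit (strat2 p q assign) h
      = ∏ i, (if h i then (strat2 p q assign i).init else 1 - (strat2 p q assign i).init) := by
    intro h _
    unfold fullInit
    exact Finset.prod_congr rfl fun i _ => habs i (h i)
  rw [Finset.sum_congr rfl hrw,
    cluster_sum focal assign
      (fun i b => if b then (strat2 p q assign i).init else 1 - (strat2 p q assign i).init) A x y]
  simp only [↓reduceIte, Bool.false_eq_true, if_false]
  have hfocal : (strat2 p q assign focal) = p := by simp [strat2, hassign]
  congr 1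
  congr 1
  · rw [← habs focal A, hfocal]
  · -- p block
    have hblock : ∀ T ∈ (pSet focal assign).powersetCard x,
        (∏ i ∈ pSet focal assign,
          (if i ∈ T then (strat2 p q assign i).init else 1 - (strat2 p q assign i).init))
        = p.init ^ x * (1 - p.init) ^ (k - x) := by
      intro T hT
      rw [mem_powersetCard] at hT
      have : ∀ i ∈ pSet focal assign,
          (if i ∈ T then (strat2 p q assign i).init else 1 - (strat2 p q assign i).init)
          = (if i ∈ T then p.init else 1 - p.init) := by
        intro i hi
        simp only [pSet, mem_filter, mem_univ, true_and] at hi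
        unfold strat2
        rw [hi.2]
        simp
      rw [Finset.prod_congr rfl this, prod_ite_mem' _ _ hT.1, hT.2, hpcard]
    rw [Finset.sum_congr rfl hblock, sum_powersetCard_const, hpcard]
    ring
  · -- q block
    have hblock : ∀ T ∈ (qSet focal assign).powersetCard y,
        (∏ i ∈ qSet focal assign,
          (if i ∈ T then (strat2 p q assign i).init else 1 - (strat2 p q assign i).init))
        = q.init ^ y * (1 - q.init) ^ ((n-1-k) - y) := by
      intro T hT
      rw [mem_powersetCard] at hT
      have : ∀ i ∈ qSet focal assign,
          (if i ∈ T then (strat2 p q assign i).init else 1 - (strat2 p q assign i).init)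
          = (if i ∈ T then q.init else 1 - q.init) := by
        intro i hi
        simp only [qSet, mem_filter, mem_univ, true_and] at hi
        unfold strat2
        rw [hi.2]
        simp
      rw [Finset.prod_congr rfl this, prod_ite_mem' _ _ hT.1, hT.2, hqcard]
    rw [Finset.sum_congr rfl hblock, sum_powersetCard_const, hqcard]
    ring

lemma lump_step (k : ℕ) (p q : Mem1) (hp : p.valid) (hq : q.valid)
    (hassign : assign focal = true)
    (hpcard : (pSet focal assign).card = k) (hqcard : (qSet focal assign).card = n - 1 - k)
    (A A' : Bool) (x y x' y' : ℕ) (h : FullState n) (hh : h ∈ cluster focal assign A x y) :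
    ∑ h' ∈ cluster focal assign A' x' y', fullM (strat2 p q assign) h h'
      = |1 - (if A' then (1:ℝ) else 0) - p.cond A (x + y)| *
        transfer (p.cond true (x + y + (if A then 1 else 0) - 1))
                 (p.cond false (x + y + (if A then 1 else 0))) x k x' *
        transfer (q.cond true (x + y + (if A then 1 else 0) - 1))
                 (q.cond false (x + y + (if A then 1 else 0))) y (n-1-k) y' := by
  have hσ : nCoop h = x + y + (if A then 1 else 0) := nCoop_of_cluster focal assign h A x y hh
  have hhc := (mem_cluster_iff focal assign h A x y).mp hh
  set cnd : Fin n → ℝ :=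
    fun i => (strat2 p q assign i).cond (h i) (nCoop h - if h i then 1 else 0) with hcnd
  have hM : ∀ h' ∈ cluster focal assign A' x' y',
      fullM (strat2 p q assign) h h' = ∏ i, (if h' i then cnd i else 1 - cnd i) := by
    intro h' _
    rfl
  rw [Finset.sum_congr rfl hM,
    cluster_sum focal assign (fun i b => if b then cnd i else 1 - cnd i) A' x' y']
  simp only [↓reduceIte, Bool.false_eq_true, if_false]
  have hfocal : (strat2 p q assign focal) = p := by simp [strat2, hassign]
  have hcf : cnd focal = p.cond A (x + y) := by
    rw [hcnd]
    simp only
    rw [hfocal, hhc.1, hσ]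
    cases A
    · simp
    · simp
  congr 1
  congr 1
  · -- focal factor
    rw [hcf]
    have hb := hp.2 A (x + y)
    cases A'
    · simp only [Bool.false_eq_true, if_false]
      rw [sub_zero, abs_of_nonneg (by have := hb.2; linarith)]
    · simp only [↓reduceIte]
      rw [show (1:ℝ) - 1 - p.cond A (x+y) = -(p.cond A (x+y)) by ring, abs_neg,
        abs_of_nonneg hb.1]
  · -- p block
    set pc := p.cond true (x + y + (if A then 1 else 0) - 1)
    set pd := p.cond false (x + y + (if A then 1 else 0))
    set Cp := (pSet focal assign).filter (fun i => h i = true) with hCp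
    have hCsub : Cp ⊆ pSet focal assign := filter_subset _ _
    have hcnd_p : ∀ i ∈ pSet focal assign, cnd i = (if i ∈ Cp then pc else pd) := by
      intro i hi
      have hstrat : strat2 p q assign i = p := by
        simp only [pSet, mem_filter, mem_univ, true_and] at hi
        simp [strat2, hi.2]
      rw [hcnd]
      simp only
      rw [hstrat]
      by_cases hc : h i = true
      · rw [if_pos (mem_filter.mpr ⟨hi, hc⟩), hc, hσ]
        simp [pc]
      · have hcf2 : h i = false := by simpa using hc
        have hnm : i ∉ Cp := fun hm => hc (mem_filter.mp hm).2
        rw [if_neg hnm, hcf2, hσ]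
        simp [pd]
    have hbl : ∀ T ∈ (pSet focal assign).powersetCard x',
        (∏ i ∈ pSet focal assign, (if i ∈ T then cnd i else 1 - cnd i))
        = ∏ i ∈ pSet focal assign,
            (if i ∈ T then (if i ∈ Cp then pc else pd)
             else (if i ∈ Cp then 1 - pc else 1 - pd)) := by
      intro T _
      refine Finset.prod_congr rfl fun i hi => ?_
      rw [hcnd_p i hi]
      by_cases hT : i ∈ T
      · rw [if_pos hT, if_pos hT]
      · rw [if_neg hT, if_neg hT]
        by_cases hC : i ∈ Cp
        · rw [if_pos hC, if_pos hC]
        · rw [if_neg hC, if_neg hC]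
    rw [Finset.sum_congr rfl hbl, block_eval _ _ hCsub, hpcard,
      show Cp.card = x from hhc.2.1]
  · -- q block
    set qc := q.cond true (x + y + (if A then 1 else 0) - 1)
    set qd := q.cond false (x + y + (if A then 1 else 0))
    set Cq := (qSet focal assign).filter (fun i => h i = true) with hCq
    have hCsub : Cq ⊆ qSet focal assign := filter_subset _ _
    have hcnd_q : ∀ i ∈ qSet focal assign, cnd i = (if i ∈ Cq then qc else qd) := by
      intro i hi
      have hstrat : strat2 p q assign i = q := by
        simp only [qSet, mem_filter, mem_univ, true_and] at hi
        simp [strat2, hi.2]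
      rw [hcnd]
      simp only
      rw [hstrat]
      by_cases hc : h i = true
      · rw [if_pos (mem_filter.mpr ⟨hi, hc⟩), hc, hσ]
        simp [qc]
      · have hcf2 : h i = false := by simpa using hc
        have hnm : i ∉ Cq := fun hm => hc (mem_filter.mp hm).2
        rw [if_neg hnm, hcf2, hσ]
        simp [qd]
    have hbl : ∀ T ∈ (qSet focal assign).powersetCard y',
        (∏ i ∈ qSet focal assign, (if i ∈ T then cnd i else 1 - cnd i))
        = ∏ i ∈ qSet focal assign,
            (if i ∈ T then (if i ∈ Cq then qc else qd)
             else (if i ∈ Cq then 1 - qc else 1 - qd)) := by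
      intro T _
      refine Finset.prod_congr rfl fun i hi => ?_
      rw [hcnd_q i hi]
      by_cases hT : i ∈ T
      · rw [if_pos hT, if_pos hT]
      · rw [if_neg hT, if_neg hT]
        by_cases hC : i ∈ Cq
        · rw [if_pos hC, if_pos hC]
        · rw [if_neg hC, if_neg hC]
    rw [Finset.sum_congr rfl hbl, block_eval _ _ hCsub, hqcard,
      show Cq.card = y from hhc.2.2]

lemma sum_cluster_partition (k : ℕ)
    (hpcard : (pSet focal assign).card = k) (hqcard : (qSet focal assign).card = n - 1 - k)
    (hnk : n - 1 - k < n - k) (F : FullState n → ℝ) :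
    ∑ s : Bool × Fin (k+1) × Fin (n-k),
        ∑ h ∈ cluster focal assign s.1 (s.2.1 : ℕ) (s.2.2 : ℕ), F h
      = ∑ h : FullState n, F h := by
  set φ : FullState n → Bool × Fin (k+1) × Fin (n-k) := fun h =>
    (h focal,
     ⟨((pSet focal assign).filter (fun i => h i = true)).card,
      Nat.lt_succ_of_le (hpcard ▸ card_filter_le _ _)⟩,
     ⟨((qSet focal assign).filter (fun i => h i = true)).card,
      lt_of_le_of_lt (hqcard ▸ card_filter_le _ _) hnk⟩) with hφ
  have hcl : ∀ s : Bool × Fin (k+1) × Fin (n-k),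
      cluster focal assign s.1 (s.2.1 : ℕ) (s.2.2 : ℕ)
        = Finset.univ.filter (fun h => φ h = s) := by
    intro s
    ext h
    rw [mem_cluster_iff]
    simp only [mem_filter, mem_univ, true_and, hφ, Prod.ext_iff, Fin.ext_iff]
  calc ∑ s : Bool × Fin (k+1) × Fin (n-k),
        ∑ h ∈ cluster focal assign s.1 (s.2.1 : ℕ) (s.2.2 : ℕ), F h
      = ∑ s : Bool × Fin (k+1) × Fin (n-k),
          ∑ h ∈ Finset.univ.filter (fun h => φ h = s), F h := by
        exact Finset.sum_congr rfl fun s _ => by rw [hcl s]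
    _ = ∑ h : FullState n, F h := Finset.sum_fiberwise _ _ _

end MainAux

/-- For every round `t ≥ 0`, every focal action, every `x ∈ {0,…,k}`
and `y ∈ {0,…,n-1-k}`, the clustered distribution after `t` steps of the reduced
chain equals the aggregated full-chain distribution. -/
theorem state_clustering_t_step (n k : ℕ) (hn : 2 ≤ n) (hk : k ≤ n - 1)
    (p q : Mem1) (hp : p.valid) (hq : q.valid)
    (focal : Fin n) (hfocal : (focal : ℕ) = 0)
    (assign : Fin n → Bool) (hassign : assign focal = true)
    (hcard : (Finset.univ.filter fun i => i ≠ focal ∧ assign i = true).card = k) :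
    ∀ (t : ℕ) (A : Bool) (x : Fin (k+1)) (y : Fin (n-k)),
      (redInit n k p q ᵥ* (redM n k p q) ^ t) (A, x, y)
        = ∑ h ∈ cluster focal assign A (x:ℕ) (y:ℕ),
            (fullInit (strat2 p q assign) ᵥ* (fullM (strat2 p q assign)) ^ t) h := by
  have hpcard : (pSet focal assign).card = k := hcard
  have hunion : (pSet focal assign ∪ qSet focal assign).card = n - 1 := by
    have h1 : (insert focal (pSet focal assign ∪ qSet focal assign)).card = n := by
      rw [← univ_eq_insert focal assign]
      simp [Finset.card_univ]
    rw [Finset.card_insert_of_notMem (focal_not_mem_union focal assign)] at h1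
    omega
  have hqcard : (qSet focal assign).card = n - 1 - k := by
    have h2 := card_union_of_disjoint (pq_disjoint focal assign)
    omega
  have hnk : n - 1 - k < n - k := by omega
  intro t
  induction t with
  | zero =>
    intro A x y
    simp only [pow_zero, Matrix.vecMul_one]
    exact (init_cluster_sum focal assign k p q hp hq hassign hpcard hqcard A (x:ℕ) (y:ℕ)).symm
  | succ t ih =>
    intro A x y
    simp only [pow_succ, ← Matrix.vecMul_vecMul]
    have hL : ((redInit n k p q ᵥ* redM n k p q ^ t) ᵥ* redM n k p q) (A, x, y)
        = ∑ s : Bool × Fin (k+1) × Fin (n-k),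
            (redInit n k p q ᵥ* redM n k p q ^ t) s * redM n k p q s (A, x, y) := rfl
    have hR : ∀ h' : FullState n,
        ((fullInit (strat2 p q assign) ᵥ* fullM (strat2 p q assign) ^ t)
            ᵥ* fullM (strat2 p q assign)) h'
        = ∑ h : FullState n,
            (fullInit (strat2 p q assign) ᵥ* fullM (strat2 p q assign) ^ t) h *
              fullM (strat2 p q assign) h h' := fun h' => rfl
    rw [hL]
    have step1 : ∀ s : Bool × Fin (k+1) × Fin (n-k),
        (redInit n k p q ᵥ* redM n k p q ^ t) s * redM n k p q s (A, x, y)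
        = ∑ h ∈ cluster focal assign s.1 (s.2.1 : ℕ) (s.2.2 : ℕ),
            ∑ h' ∈ cluster focal assign A (x:ℕ) (y:ℕ),
              (fullInit (strat2 p q assign) ᵥ* fullM (strat2 p q assign) ^ t) h *
                fullM (strat2 p q assign) h h' := by
      rintro ⟨B, xs, ys⟩
      rw [ih B xs ys, Finset.sum_mul]
      refine Finset.sum_congr rfl fun h hh => ?_
      rw [← Finset.mul_sum]
      congr 1
      exact (lump_step focal assign k p q hp hq hassign hpcard hqcard B A
        (xs:ℕ) (ys:ℕ) (x:ℕ) (y:ℕ) h hh).symm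
    rw [Finset.sum_congr rfl (fun s _ => step1 s),
      sum_cluster_partition focal assign k hpcard hqcard hnk
        (fun h => ∑ h' ∈ cluster focal assign A (x:ℕ) (y:ℕ),
          (fullInit (strat2 p q assign) ᵥ* fullM (strat2 p q assign) ^ t) h *
            fullM (strat2 p q assign) h h'),
      Finset.sum_comm]
    exact Finset.sum_congr rfl fun h' _ => (hR h').symm
end
end

section
/- Let 0 < δ < 1, let v = (1−δ) Σ_{t=0}^∞ δ^t v(0) M^t be the discounted mean distribution of the full chain, and let μ = (1−δ) Σ_{t=0}^∞ δ^t μ(0) (M')^t be the discounted mean distribution of the reduced chain. Then for every A ∈ {C,D}, x ∈ {0,…,k} and y ∈ {0,…,n−1−k}: μ_{(A,x,y)} = Σ_{h ∈ A_{Axy}} v_h. -/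
open Finset Matrix
open scoped Classical

noncomputable section

/-!
Given the current state, the players act independently, so the numbers of next-round
cooperators among the focal player, the `p`-co-players and the `q`-co-players are independent.
From a state in cluster `(A, x, y)` each group is a family of Bernoulli trials with one rate for
its previous cooperators and one for its previous defectors, and these rates depend on the state
only through `(A, x, y)`; the count of successes is the binomial convolution `transfer`. So the
probability of moving into a given cluster is the same from every state of a cluster and equals
the entry of `M'`: the clustering map lumps `M` onto `M'`. Aggregating over clusters therefore
intertwines `v ↦ v M` with `μ ↦ μ M'`, hence also the powers, and since every `v(0) M^t` is a
probability vector the discounted series can be summed cluster by cluster.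
-/

section Fibers

variable {ι κ β R : Type*} [Fintype ι] [DecidableEq ι] [Fintype κ] [DecidableEq κ]

def piEquivPiFiber (label : ι → κ) :
    (ι → β) ≃ ((k : κ) → {i // label i = k} → β) where
  toFun f _ i := f i
  invFun F i := F (label i) ⟨i, rfl⟩
  left_inv _ := rfl
  right_inv F := by ext k ⟨i, rfl⟩; rfl

theorem sum_prod_restrict_fiber_eq_prod_sum [Fintype β] [CommSemiring R] (label : ι → κ)
    (Φ : (k : κ) → ({i // label i = k} → β) → R) :
    ∑ f : ι → β, ∏ k, Φ k (fun i => f i) = ∏ k, ∑ φ, Φ k φ := by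
  rw [Fintype.prod_sum]
  exact Fintype.sum_equiv (piEquivPiFiber label) _ _ fun _ => rfl

omit [DecidableEq ι] in
theorem card_filter_subtype (p q : ι → Prop) [DecidablePred p] [DecidablePred q] :
    #{j : {i // p i} | q j} = #{i | p i ∧ q i} := by
  rw [← Fintype.card_subtype, ← Fintype.card_subtype]
  exact Fintype.card_congr (Equiv.subtypeSubtypeEquivSubtypeInter p q)

end Fibers

theorem abs_one_sub_ite_sub {c : ℝ} (hc : c ∈ Set.Icc (0 : ℝ) 1) (b : Bool) :
    |1 - (if b then (1 : ℝ) else 0) - c| = if b then c else 1 - c := by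
  cases b
  · simp [abs_of_nonneg (sub_nonneg.2 hc.2)]
  · simp [abs_of_nonneg hc.1]

section Bernoulli

variable {ι κ R : Type*} [Fintype ι] [DecidableEq ι] [CommRing R]

def successCountProb (r : ι → R) (m : ℕ) : R :=
  ∑ f : ι → Bool with #{i | f i = true} = m, ∏ i, if f i then r i else 1 - r i

theorem sum_prod_bernoulli (r : ι → R) :
    ∑ f : ι → Bool, ∏ i, (if f i then r i else 1 - r i) = 1 := by
  rw [← Fintype.prod_sum fun i (b : Bool) => if b then r i else 1 - r i]
  simp

theorem card_filter_card_true_eq_choose (m : ℕ) :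
    #{f : ι → Bool | #{i | f i = true} = m} = (Fintype.card ι).choose m := by
  rw [← card_univ, ← card_powersetCard]
  refine card_nbij' (fun f => ({i | f i = true} : Finset ι)) (fun s i => decide (i ∈ s))
    ?_ ?_ ?_ ?_
  · intro f hf; simpa using hf
  · intro s hs; simpa using hs
  · intro f _; funext i; simp
  · intro s _; ext i; simp

theorem successCountProb_const (a : R) (m : ℕ) :
    successCountProb (fun _ : ι => a) m
      = (Fintype.card ι).choose m * a ^ m * (1 - a) ^ (Fintype.card ι - m) := by
  have hterm : ∀ f ∈ ({f : ι → Bool | #{i | f i = true} = m} : Finset _),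
      (∏ i, if f i then a else 1 - a) = a ^ m * (1 - a) ^ (Fintype.card ι - m) := by
    intro f hf
    rw [mem_filter] at hf
    rw [prod_ite, prod_const, prod_const, hf.2, ← hf.2, ← card_univ,
      ← card_filter_add_card_filter_not (s := univ) (fun i => f i = true)]
    simp
  rw [successCountProb, sum_congr rfl hterm, sum_const, card_filter_card_true_eq_choose,
    nsmul_eq_mul, mul_assoc]

theorem sum_prod_bernoulli_of_fiber_counts [Fintype κ] [DecidableEq κ] (r : ι → R)
    (label : ι → κ) (m : κ → ℕ) :
    ∑ f : ι → Bool with ∀ k, #{i | label i = k ∧ f i = true} = m k,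
        ∏ i, (if f i then r i else 1 - r i)
      = ∏ k, successCountProb (fun i : {i // label i = k} => r i) (m k) := by
  simp only [successCountProb, sum_filter]
  rw [← sum_prod_restrict_fiber_eq_prod_sum label]
  refine sum_congr rfl fun f _ => ?_
  rw [Fintype.prod_ite_zero, Fintype.prod_fiberwise label (fun i => if f i then r i else 1 - r i)]
  congr 1
  exact propext (forall_congr' fun k => by
    rw [← card_filter_subtype (label · = k) (f · = true)])

omit [DecidableEq ι] in
theorem card_filter_true_add_card_filter_false (c f : ι → Bool) :
    #{i | c i = true ∧ f i = true} + #{i | c i = false ∧ f i = true} = #{i | f i = true} := by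
  rw [← card_filter_add_card_filter_not (s := {i | f i = true}) (fun i => c i = true),
    filter_filter, filter_filter]
  congr 2 <;> ext i <;> simp [and_comm]

theorem successCountProb_eq_sum_antidiagonal (r : ι → R) (c : ι → Bool) (m : ℕ) :
    successCountProb r m = ∑ ij ∈ antidiagonal m,
      successCountProb (fun i : {i // c i = true} => r i) ij.1 *
        successCountProb (fun i : {i // c i = false} => r i) ij.2 := by
  rw [successCountProb, ← sum_fiberwise_of_maps_to (t := antidiagonal m)
    (g := fun f => (#{i | c i = true ∧ f i = true}, #{i | c i = false ∧ f i = true}))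
    (fun f hf => by
      rw [mem_filter] at hf
      rw [HasAntidiagonal.mem_antidiagonal, card_filter_true_add_card_filter_false, hf.2])]
  refine sum_congr rfl fun ij hij => ?_
  rw [HasAntidiagonal.mem_antidiagonal] at hij
  have hfib := sum_prod_bernoulli_of_fiber_counts r c (fun b => if b then ij.1 else ij.2)
  simp only [Fintype.prod_bool, if_true, Bool.false_eq_true, if_false] at hfib
  rw [← hfib]
  refine sum_congr ?_ fun _ _ => rfl
  ext f
  simp only [mem_filter, mem_univ, true_and, Bool.forall_bool, Prod.ext_iff,
    ← card_filter_true_add_card_filter_false c f, Bool.false_eq_true, ite_false, ite_true]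
  omega

theorem successCountProb_const_of_card_eq_one (hι : Fintype.card ι = 1) {c : ℝ}
    (hc : c ∈ Set.Icc (0 : ℝ) 1) (A : Bool) :
    successCountProb (fun _ : ι => c) (if A then 1 else 0) = |1 - (if A then 1 else 0) - c| := by
  rw [successCountProb_const, hι, abs_one_sub_ite_sub hc]
  cases A <;> simp

theorem successCountProb_two_rates (pc pd : ℝ) (c : ι → Bool) (m : ℕ) :
    successCountProb (fun i => if c i then pc else pd) m
      = transfer pc pd #{i | c i = true} (Fintype.card ι) m := by
  have hrate : ∀ b (i : {i // c i = b}), (if c i then pc else pd) = if b then pc else pd :=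
    fun b i => by rw [i.2]
  have hcard_false : Fintype.card {i // c i = false} = Fintype.card ι - #{i | c i = true} := by
    rw [Fintype.card_subtype, ← card_univ,
      ← card_filter_add_card_filter_not (s := univ) (fun i => c i = true)]
    simp
  rw [successCountProb_eq_sum_antidiagonal _ c, Nat.sum_antidiagonal_eq_sum_range_succ_mk,
    transfer]
  refine sum_congr rfl fun j _ => ?_
  simp only [hrate, ite_true, Bool.false_eq_true, ite_false, successCountProb_const,
    hcard_false, Fintype.card_subtype]
  ring

end Bernoulli

section Lumping

variable {α β R : Type*} [Fintype α] [Fintype β] [DecidableEq β]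

def fiberSum [AddCommMonoid R] (c : α → β) (v : α → R) : β → R :=
  fun b => ∑ a with c a = b, v a

variable [CommSemiring R] {c : α → β} {M : Matrix α α R} {N : Matrix β β R}

-- `hM` says that `M` is (strongly) lumpable along `c`, with lumped matrix `N`.
theorem fiberSum_vecMul (hM : ∀ a, fiberSum c (M a) = N (c a)) (v : α → R) :
    fiberSum c (v ᵥ* M) = fiberSum c v ᵥ* N := by
  funext b
  simp only [fiberSum, vecMul, dotProduct]
  rw [sum_comm]
  simp only [← mul_sum]
  calc ∑ a, v a * ∑ a' with c a' = b, M a a'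
      = ∑ a, v a * N (c a) b := sum_congr rfl fun a _ => by rw [← hM a, fiberSum]
    _ = ∑ b', (∑ a with c a = b', v a) * N b' b := by
      rw [← sum_fiberwise univ c]
      exact sum_congr rfl fun b' _ => by
        rw [sum_mul]; exact sum_congr rfl fun a ha => by rw [(mem_filter.1 ha).2]

theorem fiberSum_vecMul_pow [DecidableEq α] (hM : ∀ a, fiberSum c (M a) = N (c a)) (v : α → R)
    (t : ℕ) :
    fiberSum c (v ᵥ* M ^ t) = fiberSum c v ᵥ* N ^ t := by
  induction t generalizing v with
  | zero => simp
  | succ t ih => rw [pow_succ', ← vecMul_vecMul, ih, fiberSum_vecMul hM, pow_succ', vecMul_vecMul]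

end Lumping

theorem fiberSum_discMean {α β : Type*} [Fintype α] [DecidableEq α] [Fintype β]
    [DecidableEq β] {c : α → β} {M : Matrix α α ℝ} {N : Matrix β β ℝ}
    (hM : ∀ a, fiberSum c (M a) = N (c a))
    (v : α → ℝ) {δ : ℝ} (hsum : ∀ a, Summable fun t => δ ^ t * (v ᵥ* M ^ t) a) :
    fiberSum c (discMean δ v M) = discMean δ (fiberSum c v) N := by
  funext b
  have hpow : ∀ t, (fiberSum c v ᵥ* N ^ t) b = ∑ a with c a = b, (v ᵥ* M ^ t) a :=
    fun t => by rw [← fiberSum_vecMul_pow hM]; rfl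
  simp only [discMean, hpow, fiberSum, mul_sum]
  rw [Summable.tsum_finsetSum fun a _ => hsum a, mul_sum]

section Stochastic

variable {α : Type*} [Fintype α] [DecidableEq α] {M : Matrix α α ℝ} {v : α → ℝ}

theorem vecMul_pow_mem_stdSimplex (hM : M ∈ rowStochastic ℝ α) (hv : v ∈ stdSimplex ℝ α)
    (t : ℕ) : v ᵥ* M ^ t ∈ stdSimplex ℝ α := by
  have hMt := pow_mem hM t
  refine ⟨nonneg_vecMul_of_mem_rowStochastic hMt hv.1, ?_⟩
  simpa only [dotProduct_one] using
    vecMul_dotProduct_one_eq_one_rowStochastic hMt (by rw [dotProduct_one]; exact hv.2)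

theorem summable_discounted_vecMul_pow (hM : M ∈ rowStochastic ℝ α)
    (hv : v ∈ stdSimplex ℝ α) {δ : ℝ} (hδ0 : 0 ≤ δ) (hδ1 : δ < 1) (a : α) :
    Summable fun t => δ ^ t * (v ᵥ* M ^ t) a := by
  refine (summable_geometric_of_lt_one hδ0 hδ1).of_nonneg_of_le
    (fun t => mul_nonneg (pow_nonneg hδ0 t) ((vecMul_pow_mem_stdSimplex hM hv t).1 a))
    (fun t => mul_le_of_le_one_right (pow_nonneg hδ0 t) ?_)
  exact stdSimplex.le_one ⟨_, vecMul_pow_mem_stdSimplex hM hv t⟩ a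

end Stochastic

section Game

variable {n : ℕ}

theorem fullM_apply (strat : Fin n → Mem1) (h h' : FullState n) :
    fullM strat h h' = ∏ i, if h' i then (strat i).cond (h i) (nCoop h - if h i then 1 else 0)
      else 1 - (strat i).cond (h i) (nCoop h - if h i then 1 else 0) := rfl

theorem fullM_mem_rowStochastic {strat : Fin n → Mem1} (hstrat : ∀ i, (strat i).valid) :
    fullM strat ∈ rowStochastic ℝ (FullState n) := by
  refine mem_rowStochastic_iff_sum.2 ⟨fun h h' => ?_, fun h => sum_prod_bernoulli _⟩
  refine (fullM_apply strat h h').symm ▸ prod_nonneg fun i _ => ?_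
  have hc := (hstrat i).2 (h i) (nCoop h - if h i then 1 else 0)
  generalize (strat i).cond (h i) (nCoop h - if h i then 1 else 0) = c at hc ⊢
  split_ifs
  · exact hc.1
  · exact sub_nonneg.2 hc.2

theorem fullInit_eq_prod {strat : Fin n → Mem1} (hstrat : ∀ i, (strat i).valid)
    (h : FullState n) :
    fullInit strat h = ∏ i, if h i then (strat i).init else 1 - (strat i).init :=
  prod_congr rfl fun i _ => abs_one_sub_ite_sub (hstrat i).1 (h i)

theorem fullInit_mem_stdSimplex {strat : Fin n → Mem1} (hstrat : ∀ i, (strat i).valid) :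
    fullInit strat ∈ stdSimplex ℝ (FullState n) :=
  ⟨fun _ => prod_nonneg fun _ _ => abs_nonneg _, by
    simp only [fullInit_eq_prod hstrat, sum_prod_bernoulli]⟩

-- A cluster fixes the number of cooperators in each role: the focal player (`none`), the
-- `p`-co-players (`some true`) and the `q`-co-players (`some false`).
def role (focal : Fin n) (assign : Fin n → Bool) (i : Fin n) : Option Bool :=
  if i = focal then none else some (assign i)

def clusterTarget (A : Bool) (x y : ℕ) : Option Bool → ℕ
  | none => if A then 1 else 0
  | some true => x
  | some false => y

variable {k : ℕ} {focal : Fin n} {assign : Fin n → Bool}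

theorem role_eq_none_iff {i : Fin n} : role focal assign i = none ↔ i = focal := by
  unfold role; split_ifs <;> simp [*]

theorem role_eq_some_iff {i : Fin n} {b : Bool} :
    role focal assign i = some b ↔ i ≠ focal ∧ assign i = b := by
  unfold role; split_ifs <;> simp [*]

theorem card_role_none_and (h : FullState n) :
    #{i | role focal assign i = none ∧ h i = true} = if h focal then 1 else 0 := by
  rw [card_filter]
  simp [role, ite_and]

theorem card_role_some_and (h : FullState n) (b : Bool) :
    #{i | role focal assign i = some b ∧ h i = true}
      = #{i | i ≠ focal ∧ assign i = b ∧ h i = true} := by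
  simp only [role_eq_some_iff, and_assoc]

theorem mem_cluster_iff_role_counts {h : FullState n} {A : Bool} {x y : ℕ} :
    h ∈ cluster focal assign A x y
      ↔ ∀ o, #{i | role focal assign i = o ∧ h i = true} = clusterTarget A x y o := by
  simp only [cluster, mem_filter, mem_univ, true_and, Option.forall, Bool.forall_bool,
    card_role_none_and, card_role_some_and, clusterTarget]
  cases h focal <;> cases A <;> simp [and_comm]

theorem nCoop_of_mem_cluster {h : FullState n} {A : Bool} {x y : ℕ}
    (hh : h ∈ cluster focal assign A x y) : nCoop h = x + y + if A then 1 else 0 := by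
  rw [mem_cluster_iff_role_counts] at hh
  rw [nCoop, card_eq_sum_card_fiberwise (f := role focal assign) (t := univ)
    (fun _ _ => mem_coe.2 (mem_univ _))]
  simp only [filter_filter, and_comm (a := h _ = true), Fintype.sum_option, Fintype.sum_bool, hh,
    clusterTarget]
  ring

theorem add_card_ne_focal_and_eq_false
    (hcard : #{i | i ≠ focal ∧ assign i = true} = k) :
    k + #{i | i ≠ focal ∧ assign i = false} = n - 1 := by
  have hsplit := card_filter_add_card_filter_not (s := {i | i ≠ focal}) (fun i => assign i = true)
  rw [filter_filter, filter_filter, hcard, filter_ne' univ focal, card_erase_of_mem (mem_univ _),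
    card_univ, Fintype.card_fin] at hsplit
  simpa only [Bool.not_eq_true] using hsplit

theorem card_ne_focal_and_le (h : FullState n) (b : Bool) :
    #{i | i ≠ focal ∧ assign i = b ∧ h i = true} ≤ #{i | i ≠ focal ∧ assign i = b} :=
  card_le_card fun i => by simp only [mem_filter]; tauto

theorem card_role_none : Fintype.card {i // role focal assign i = none} = 1 := by
  rw [Fintype.card_subtype]
  simpa using card_role_none_and (focal := focal) (assign := assign) (fun _ => true)

theorem card_role_some (hcard : #{i | i ≠ focal ∧ assign i = true} = k) (b : Bool) :
    Fintype.card {i // role focal assign i = some b} = if b then k else n - 1 - k := by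
  have hsum := add_card_ne_focal_and_eq_false hcard
  rw [Fintype.card_subtype]
  have := card_role_some_and (focal := focal) (assign := assign) (fun _ => true) b
  simp only [and_true] at this
  rw [this]
  cases b
  · simp only [Bool.false_eq_true, if_false]
    omega
  · exact hcard

def clusterOf (hcard : #{i | i ≠ focal ∧ assign i = true} = k) (h : FullState n) :
    Bool × Fin (k + 1) × Fin (n - k) :=
  (h focal,
   ⟨#{i | i ≠ focal ∧ assign i = true ∧ h i = true}, by
      have := card_ne_focal_and_le (focal := focal) (assign := assign) h true
      omega⟩,
   ⟨#{i | i ≠ focal ∧ assign i = false ∧ h i = true}, by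
      have hle := card_ne_focal_and_le (focal := focal) (assign := assign) h false
      have hsum := add_card_ne_focal_and_eq_false hcard
      have hn := focal.pos
      omega⟩)

theorem filter_clusterOf_eq (hcard : #{i | i ≠ focal ∧ assign i = true} = k) (A : Bool)
    (x : Fin (k + 1)) (y : Fin (n - k)) :
    ({h | clusterOf hcard h = (A, x, y)} : Finset (FullState n)) = cluster focal assign A x y := by
  ext h
  simp [clusterOf, cluster, Fin.ext_iff]

theorem fiberSum_clusterOf (hcard : #{i | i ≠ focal ∧ assign i = true} = k)
    (v : FullState n → ℝ) (A : Bool) (x : Fin (k + 1)) (y : Fin (n - k)) :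
    fiberSum (clusterOf hcard) v (A, x, y) = ∑ h ∈ cluster focal assign A x y, v h := by
  rw [fiberSum, filter_clusterOf_eq]

theorem sum_cluster_prod_bernoulli (r : Fin n → ℝ) (A : Bool) (x y : ℕ) :
    ∑ h ∈ cluster focal assign A x y, ∏ i, (if h i then r i else 1 - r i)
      = successCountProb (fun i : {i // role focal assign i = none} => r i) (if A then 1 else 0) *
        (successCountProb (fun i : {i // role focal assign i = some true} => r i) x *
          successCountProb (fun i : {i // role focal assign i = some false} => r i) y) := by
  have hfib := sum_prod_bernoulli_of_fiber_counts r (role focal assign) (clusterTarget A x y)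
  rw [Fintype.prod_option, Fintype.prod_bool] at hfib
  refine Eq.trans (sum_congr ?_ fun _ _ => rfl) hfib
  ext h
  simp only [mem_cluster_iff_role_counts, mem_filter, mem_univ, true_and]

theorem mem_cluster_clusterOf (hcard : #{i | i ≠ focal ∧ assign i = true} = k)
    (h : FullState n) :
    h ∈ cluster focal assign (clusterOf hcard h).1 (clusterOf hcard h).2.1
      (clusterOf hcard h).2.2 := by
  rw [← filter_clusterOf_eq hcard]
  simp

theorem card_role_some_filter (h : FullState n) (b : Bool) :
    #{j : {i // role focal assign i = some b} | h j = true}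
      = #{i | i ≠ focal ∧ assign i = b ∧ h i = true} := by
  rw [card_filter_subtype (role focal assign · = some b) (h · = true), card_role_some_and]

variable (p q : Mem1)

theorem strat2_of_role_none (hassign : assign focal = true) {i : Fin n}
    (hi : role focal assign i = none) : strat2 p q assign i = p := by
  rw [role_eq_none_iff] at hi
  simp [strat2, hi, hassign]

theorem strat2_of_role_some {i : Fin n} {b : Bool} (hi : role focal assign i = some b) :
    strat2 p q assign i = if b then p else q := by
  rw [role_eq_some_iff] at hi
  simp [strat2, hi.2]

theorem strat2_valid {p q : Mem1} (hp : p.valid) (hq : q.valid) (assign : Fin n → Bool)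
    (i : Fin n) : (strat2 p q assign i).valid := by
  unfold strat2; split_ifs
  exacts [hp, hq]

theorem fiberSum_fullInit (hp : p.valid) (hq : q.valid) (hassign : assign focal = true)
    (hcard : #{i | i ≠ focal ∧ assign i = true} = k) :
    fiberSum (clusterOf hcard) (fullInit (strat2 p q assign)) = redInit n k p q := by
  have hrate : ∀ o, (fun i : {i // role focal assign i = o} => (strat2 p q assign i).init)
      = fun _ => (o.elim p fun b => if b then p else q).init := by
    rintro (_ | b) <;> funext i
    · rw [strat2_of_role_none p q hassign i.2]; rfl
    · rw [strat2_of_role_some p q i.2]; rfl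
  funext ⟨A, x, y⟩
  rw [fiberSum_clusterOf, sum_congr rfl fun h _ => fullInit_eq_prod (strat2_valid hp hq assign) h,
    sum_cluster_prod_bernoulli, hrate, hrate, hrate]
  simp only [Option.elim, ite_true, Bool.false_eq_true, ite_false]
  rw [successCountProb_const_of_card_eq_one card_role_none hp.1, successCountProb_const,
    successCountProb_const, card_role_some hcard, card_role_some hcard]
  simp only [ite_true, Bool.false_eq_true, ite_false, redInit]
  ring

theorem fiberSum_fullM_row (hp : p.valid) (hassign : assign focal = true)
    (hcard : #{i | i ≠ focal ∧ assign i = true} = k) (h : FullState n) :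
    fiberSum (clusterOf hcard) (fullM (strat2 p q assign) h)
      = redM n k p q (clusterOf hcard h) := by
  set σ := nCoop h
  have hσ : σ = #{i | i ≠ focal ∧ assign i = true ∧ h i = true}
      + #{i | i ≠ focal ∧ assign i = false ∧ h i = true} + if h focal then 1 else 0 :=
    nCoop_of_mem_cluster (mem_cluster_clusterOf hcard h)
  have hfocal : (fun i : {i // role focal assign i = none} =>
      (strat2 p q assign i).cond (h i) (σ - if h i then 1 else 0))
      = fun _ => p.cond (h focal) (#{i | i ≠ focal ∧ assign i = true ∧ h i = true}
          + #{i | i ≠ focal ∧ assign i = false ∧ h i = true}) := by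
    funext ⟨i, hi⟩
    obtain rfl := role_eq_none_iff.1 hi
    rw [strat2_of_role_none p q hassign hi, hσ]
    cases h i <;> simp
  have hblock : ∀ b, (fun i : {i // role focal assign i = some b} =>
      (strat2 p q assign i).cond (h i) (σ - if h i then 1 else 0))
      = fun i : {i // role focal assign i = some b} =>
          if h i then (if b then p else q).cond true (σ - 1)
          else (if b then p else q).cond false σ := by
    intro b; funext ⟨i, hi⟩
    rw [strat2_of_role_some p q hi]
    cases h i <;> simp
  funext ⟨A', x', y'⟩
  rw [fiberSum_clusterOf, sum_congr rfl fun h' _ => fullM_apply _ h h',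
    sum_cluster_prod_bernoulli, hfocal, hblock, hblock, successCountProb_two_rates,
    successCountProb_two_rates, card_role_some hcard, card_role_some hcard,
    successCountProb_const_of_card_eq_one card_role_none (hp.2 _ _), card_role_some_filter,
    card_role_some_filter, hσ]
  simp only [ite_true, Bool.false_eq_true, ite_false, redM, Matrix.of_apply, clusterOf]
  ring

end Game

theorem state_clustering_discounted_general (n k : ℕ)
    (p q : Mem1) (hp : p.valid) (hq : q.valid)
    (focal : Fin n)
    (assign : Fin n → Bool) (hassign : assign focal = true)
    (hcard : (Finset.univ.filter fun i => i ≠ focal ∧ assign i = true).card = k)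
    (δ : ℝ) (hδ0 : 0 < δ) (hδ1 : δ < 1) :
    ∀ (A : Bool) (x : Fin (k+1)) (y : Fin (n-k)),
      discMean δ (redInit n k p q) (redM n k p q) (A, x, y)
        = ∑ h ∈ cluster focal assign A (x:ℕ) (y:ℕ),
            discMean δ (fullInit (strat2 p q assign)) (fullM (strat2 p q assign)) h := by
  intro A x y
  have hvalid := strat2_valid hp hq assign
  rw [← fiberSum_clusterOf hcard, ← fiberSum_fullInit p q hp hq hassign hcard,
    fiberSum_discMean (fiberSum_fullM_row p q hp hassign hcard) _ (summable_discounted_vecMul_pow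
      (fullM_mem_rowStochastic hvalid) (fullInit_mem_stdSimplex hvalid) hδ0.le hδ1)]

/-- The discounted mean distribution of the reduced chain aggregates
the discounted mean distribution of the full chain over each cluster. -/
theorem state_clustering_discounted (n k : ℕ) (hn : 2 ≤ n) (hk : k ≤ n - 1)
    (p q : Mem1) (hp : p.valid) (hq : q.valid)
    (focal : Fin n) (hfocal : (focal : ℕ) = 0)
    (assign : Fin n → Bool) (hassign : assign focal = true)
    (hcard : (Finset.univ.filter fun i => i ≠ focal ∧ assign i = true).card = k)
    (δ : ℝ) (hδ0 : 0 < δ) (hδ1 : δ < 1) :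
    ∀ (A : Bool) (x : Fin (k+1)) (y : Fin (n-k)),
      discMean δ (redInit n k p q) (redM n k p q) (A, x, y)
        = ∑ h ∈ cluster focal assign A (x:ℕ) (y:ℕ),
            discMean δ (fullInit (strat2 p q assign)) (fullM (strat2 p q assign)) h :=
  state_clustering_discounted_general n k p q hp hq focal assign hassign hcard δ hδ0 hδ1
end
end

section
/- Let 0 < δ < 1, let v = (1−δ) Σ_{t=0}^∞ δ^t v(0) M^t and μ = (1−δ) Σ_{t=0}^∞ δ^t μ(0) (M')^t be the discounted mean distributions of the full and reduced chains. Then the focal player's long-term payoff computed from the full chain equals that computed from the reduced chain: Σ_{h ∈ {C,D}^n} v_h s_h = Σ_{x,y} μ_{(C,x,y)} a_{x+y} + Σ_{x,y} μ_{(D,x,y)} b_{x+y}. -/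
open Finset Matrix
open scoped Classical

noncomputable section

section AuxComb
variable {ι : Type*} [DecidableEq ι]

lemma const_sum (T : Finset ι) (w : ι → Bool → ℝ) (r : ℝ)
    (hw : ∀ i ∈ T, w i true = r ∧ w i false = 1 - r) (m : ℕ) :
    ∑ S ∈ T.powersetCard m, ∏ i ∈ T, (if i ∈ S then w i true else w i false)
      = (T.card.choose m : ℝ) * r ^ m * (1 - r) ^ (T.card - m) := by
  have key : ∀ S ∈ T.powersetCard m,
      ∏ i ∈ T, (if i ∈ S then w i true else w i false) = r ^ m * (1 - r) ^ (T.card - m) := by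
    intro S hS
    rw [Finset.mem_powersetCard] at hS
    obtain ⟨hsub, hcard⟩ := hS
    rw [← Finset.prod_sdiff hsub]
    have h1 : ∏ i ∈ S, (if i ∈ S then w i true else w i false) = r ^ m := by
      rw [← hcard, ← Finset.prod_const]
      exact Finset.prod_congr rfl fun i hi => by rw [if_pos hi, (hw i (hsub hi)).1]
    have h2 : ∏ i ∈ T \ S, (if i ∈ S then w i true else w i false) = (1 - r) ^ (T.card - m) := by
      rw [← hcard, ← Finset.card_sdiff_of_subset hsub, ← Finset.prod_const]
      refine Finset.prod_congr rfl fun i hi => ?_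
      rw [if_neg (Finset.mem_sdiff.mp hi).2, (hw i (Finset.mem_sdiff.mp hi).1).2]
    rw [h1, h2]; ring
  rw [Finset.sum_congr rfl key, Finset.sum_const, Finset.card_powersetCard, nsmul_eq_mul]
  ring

lemma split_sum (T1 T2 : Finset ι) (hd : Disjoint T1 T2) (w : ι → Bool → ℝ) (m : ℕ) :
    ∑ S ∈ (T1 ∪ T2).powersetCard m, ∏ i ∈ T1 ∪ T2, (if i ∈ S then w i true else w i false)
    = ∑ j ∈ Finset.range (m+1),
        (∑ S1 ∈ T1.powersetCard j, ∏ i ∈ T1, (if i ∈ S1 then w i true else w i false)) *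
        (∑ S2 ∈ T2.powersetCard (m-j), ∏ i ∈ T2, (if i ∈ S2 then w i true else w i false)) := by
  have rhs : ∑ j ∈ Finset.range (m+1),
        (∑ S1 ∈ T1.powersetCard j, ∏ i ∈ T1, (if i ∈ S1 then w i true else w i false)) *
        (∑ S2 ∈ T2.powersetCard (m-j), ∏ i ∈ T2, (if i ∈ S2 then w i true else w i false))
      = ∑ z ∈ (Finset.range (m+1)).sigma
          (fun j => T1.powersetCard j ×ˢ T2.powersetCard (m-j)),
          (∏ i ∈ T1, (if i ∈ z.2.1 then w i true else w i false)) *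
          (∏ i ∈ T2, (if i ∈ z.2.2 then w i true else w i false)) := by
    rw [Finset.sum_sigma]
    refine Finset.sum_congr rfl fun j hj => ?_
    rw [Finset.sum_product, Finset.sum_mul_sum]
  rw [rhs]
  refine Finset.sum_nbij' (i := fun S => ⟨(S ∩ T1).card, (S ∩ T1, S ∩ T2)⟩)
    (j := fun z => z.2.1 ∪ z.2.2) ?_ ?_ ?_ ?_ ?_
  · intro S hS
    rw [Finset.mem_powersetCard] at hS
    obtain ⟨hsub, hcard⟩ := hS
    have hun : (S ∩ T1) ∪ (S ∩ T2) = S := by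
      rw [← Finset.inter_union_distrib_left]
      exact Finset.inter_eq_left.mpr hsub
    have hdd : Disjoint (S ∩ T1) (S ∩ T2) :=
      hd.mono Finset.inter_subset_right Finset.inter_subset_right
    have hcc := Finset.card_union_of_disjoint hdd
    rw [hun] at hcc
    simp only [Finset.mem_sigma, Finset.mem_range, Finset.mem_product, Finset.mem_powersetCard,
      and_true, true_and, eq_self_iff_true]
    refine ⟨?_, Finset.inter_subset_right, Finset.inter_subset_right, by omega⟩
    have : (S ∩ T1).card ≤ S.card := Finset.card_le_card Finset.inter_subset_left
    omega
  · intro z hz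
    simp only [Finset.mem_sigma, Finset.mem_range, Finset.mem_product,
      Finset.mem_powersetCard] at hz ⊢
    obtain ⟨hj, ⟨h1, h1c⟩, ⟨h2, h2c⟩⟩ := hz
    refine ⟨Finset.union_subset_union h1 h2, ?_⟩
    rw [Finset.card_union_of_disjoint (hd.mono h1 h2), h1c, h2c]
    omega
  · intro S hS
    dsimp only
    rw [Finset.mem_powersetCard] at hS
    have hun : (S ∩ T1) ∪ (S ∩ T2) = S := by
      rw [← Finset.inter_union_distrib_left]
      exact Finset.inter_eq_left.mpr hS.1
    simp only [hun]
  · rintro ⟨j, S1, S2⟩ hz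
    simp only [Finset.mem_sigma, Finset.mem_range, Finset.mem_product,
      Finset.mem_powersetCard] at hz
    obtain ⟨hj, ⟨h1, h1c⟩, ⟨h2, h2c⟩⟩ := hz
    have e1 : (S1 ∪ S2) ∩ T1 = S1 := by
      rw [Finset.union_inter_distrib_right, Finset.inter_eq_left.mpr h1,
        Finset.disjoint_iff_inter_eq_empty.mp (hd.symm.mono_left h2), Finset.union_empty]
    have e2 : (S1 ∪ S2) ∩ T2 = S2 := by
      rw [Finset.union_inter_distrib_right, Finset.inter_eq_left.mpr h2,
        Finset.disjoint_iff_inter_eq_empty.mp (hd.mono_left h1), Finset.empty_union]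
    simp [e1, e2, h1c]
  · intro S hS
    rw [Finset.mem_powersetCard] at hS
    rw [Finset.prod_union hd]
    congr 1
    · refine Finset.prod_congr rfl fun i hi => ?_
      by_cases h : i ∈ S <;> simp [h, Finset.mem_inter, hi]
    · refine Finset.prod_congr rfl fun i hi => ?_
      by_cases h : i ∈ S <;> simp [h, Finset.mem_inter, hi]

lemma transfer_sum (T T1 : Finset ι) (hT1 : T1 ⊆ T) (w : ι → Bool → ℝ) (pc pd : ℝ)
    (h1 : ∀ i ∈ T1, w i true = pc ∧ w i false = 1 - pc)
    (h2 : ∀ i ∈ T \ T1, w i true = pd ∧ w i false = 1 - pd) (m : ℕ) :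
    ∑ S ∈ T.powersetCard m, ∏ i ∈ T, (if i ∈ S then w i true else w i false)
      = transfer pc pd T1.card T.card m := by
  have hun : T1 ∪ (T \ T1) = T := Finset.union_sdiff_of_subset hT1
  have hd : Disjoint T1 (T \ T1) := Finset.disjoint_sdiff
  calc ∑ S ∈ T.powersetCard m, ∏ i ∈ T, (if i ∈ S then w i true else w i false)
      = ∑ S ∈ (T1 ∪ (T \ T1)).powersetCard m, ∏ i ∈ T1 ∪ (T \ T1),
          (if i ∈ S then w i true else w i false) := by rw [hun]
    _ = ∑ j ∈ Finset.range (m+1),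
          (∑ S1 ∈ T1.powersetCard j, ∏ i ∈ T1, (if i ∈ S1 then w i true else w i false)) *
          (∑ S2 ∈ (T \ T1).powersetCard (m-j), ∏ i ∈ T \ T1,
            (if i ∈ S2 then w i true else w i false)) := split_sum T1 (T \ T1) hd w m
    _ = transfer pc pd T1.card T.card m := by
        unfold transfer
        refine Finset.sum_congr rfl fun j hj => ?_
        rw [const_sum T1 w pc h1 j, const_sum (T \ T1) w pd h2 (m - j),
          Finset.card_sdiff_of_subset hT1]
        ring

lemma lump {α β : Type*} [Fintype α] [Fintype β] [DecidableEq α] [DecidableEq β]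
    (π : α → β) (M : Matrix α α ℝ) (M' : Matrix β β ℝ) (w0 : α → ℝ) (μ0 : β → ℝ)
    (h0 : ∀ s, ∑ h ∈ Finset.univ.filter (fun h => π h = s), w0 h = μ0 s)
    (hM : ∀ h s', ∑ h' ∈ Finset.univ.filter (fun h' => π h' = s'), M h h' = M' (π h) s')
    (t : ℕ) (s : β) :
    ∑ h ∈ Finset.univ.filter (fun h => π h = s), (w0 ᵥ* M ^ t) h = (μ0 ᵥ* M' ^ t) s := by
  induction t generalizing s with
  | zero => simpa using h0 s
  | succ t ih =>
    rw [pow_succ, pow_succ, ← Matrix.vecMul_vecMul, ← Matrix.vecMul_vecMul]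
    calc ∑ h' ∈ Finset.univ.filter (fun h => π h = s), ((w0 ᵥ* M ^ t) ᵥ* M) h'
        = ∑ h' ∈ Finset.univ.filter (fun h => π h = s), ∑ h, (w0 ᵥ* M ^ t) h * M h h' := by
          refine Finset.sum_congr rfl fun h' _ => ?_
          simp [Matrix.vecMul, dotProduct]
      _ = ∑ h, ∑ h' ∈ Finset.univ.filter (fun h => π h = s), (w0 ᵥ* M ^ t) h * M h h' :=
          Finset.sum_comm
      _ = ∑ h, (w0 ᵥ* M ^ t) h * M' (π h) s := by
          refine Finset.sum_congr rfl fun h _ => ?_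
          rw [← Finset.mul_sum, hM h s]
      _ = ∑ u, ∑ h ∈ Finset.univ.filter (fun h => π h = u), (w0 ᵥ* M ^ t) h * M' (π h) s :=
          (Finset.sum_fiberwise Finset.univ π _).symm
      _ = ∑ u, (μ0 ᵥ* M' ^ t) u * M' u s := by
          refine Finset.sum_congr rfl fun u _ => ?_
          rw [← ih u, Finset.sum_mul]
          exact Finset.sum_congr rfl fun h hh => by
            rw [(Finset.mem_filter.mp hh).2]
      _ = ((μ0 ᵥ* M' ^ t) ᵥ* M') s := by
          simp [Matrix.vecMul, dotProduct]

lemma fiber_prod_sum {ι : Type*} [Fintype ι] [DecidableEq ι] (focal : ι) (P Q : Finset ι)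
    (hPQ : Disjoint P Q) (hfP : focal ∉ P) (hfQ : focal ∉ Q)
    (huniv : insert focal (P ∪ Q) = Finset.univ)
    (A' : Bool) (x' y' : ℕ) (g : ι → Bool → ℝ) :
    ∑ h' ∈ Finset.univ.filter (fun h' : ι → Bool =>
        h' focal = A' ∧ (P.filter fun i => h' i = true).card = x' ∧
        (Q.filter fun i => h' i = true).card = y'),
      ∏ i, g i (h' i)
      = g focal A' *
        (∑ S ∈ P.powersetCard x', ∏ i ∈ P, if i ∈ S then g i true else g i false) *
        (∑ S ∈ Q.powersetCard y', ∏ i ∈ Q, if i ∈ S then g i true else g i false) := by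
  have hfPQ : focal ∉ P ∪ Q := by simp [hfP, hfQ]
  -- key decoding fact
  have keyP : ∀ (S1 S2 : Finset ι), S1 ⊆ P → S2 ⊆ Q → ∀ i ∈ P,
      (((if i = focal then A' else decide (i ∈ S1 ∪ S2)) = true) ↔ i ∈ S1) := by
    intro S1 S2 hS1 hS2 i hi
    have hne : i ≠ focal := fun h => hfP (h ▸ hi)
    rw [if_neg hne, decide_eq_true_eq, Finset.mem_union]
    constructor
    · rintro (h | h)
      · exact h
      · exact absurd hi (Finset.disjoint_right.mp hPQ (hS2 h))
    · exact Or.inl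
  have keyQ : ∀ (S1 S2 : Finset ι), S1 ⊆ P → S2 ⊆ Q → ∀ i ∈ Q,
      (((if i = focal then A' else decide (i ∈ S1 ∪ S2)) = true) ↔ i ∈ S2) := by
    intro S1 S2 hS1 hS2 i hi
    have hne : i ≠ focal := fun h => hfQ (h ▸ hi)
    rw [if_neg hne, decide_eq_true_eq, Finset.mem_union]
    constructor
    · rintro (h | h)
      · exact absurd hi (Finset.disjoint_left.mp hPQ (hS1 h))
      · exact h
    · exact Or.inr
  have filtP : ∀ (S1 S2 : Finset ι), S1 ⊆ P → S2 ⊆ Q →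
      (P.filter fun i => (if i = focal then A' else decide (i ∈ S1 ∪ S2)) = true) = S1 := by
    intro S1 S2 hS1 hS2
    ext i
    simp only [Finset.mem_filter]
    constructor
    · rintro ⟨hi, hv⟩; exact (keyP S1 S2 hS1 hS2 i hi).mp hv
    · intro hv; exact ⟨hS1 hv, (keyP S1 S2 hS1 hS2 i (hS1 hv)).mpr hv⟩
  have filtQ : ∀ (S1 S2 : Finset ι), S1 ⊆ P → S2 ⊆ Q →
      (Q.filter fun i => (if i = focal then A' else decide (i ∈ S1 ∪ S2)) = true) = S2 := by
    intro S1 S2 hS1 hS2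
    ext i
    simp only [Finset.mem_filter]
    constructor
    · rintro ⟨hi, hv⟩; exact (keyQ S1 S2 hS1 hS2 i hi).mp hv
    · intro hv; exact ⟨hS2 hv, (keyQ S1 S2 hS1 hS2 i (hS2 hv)).mpr hv⟩
  have rhs_eq : g focal A' *
        (∑ S ∈ P.powersetCard x', ∏ i ∈ P, if i ∈ S then g i true else g i false) *
        (∑ S ∈ Q.powersetCard y', ∏ i ∈ Q, if i ∈ S then g i true else g i false)
      = ∑ z ∈ P.powersetCard x' ×ˢ Q.powersetCard y',
          g focal A' * (∏ i ∈ P, if i ∈ z.1 then g i true else g i false) *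
          (∏ i ∈ Q, if i ∈ z.2 then g i true else g i false) := by
    rw [Finset.sum_product]
    rw [mul_assoc, Finset.sum_mul_sum, Finset.mul_sum]
    refine Finset.sum_congr rfl fun S1 _ => ?_
    rw [Finset.mul_sum]
    exact Finset.sum_congr rfl fun S2 _ => by ring
  rw [rhs_eq]
  refine Finset.sum_nbij'
    (i := fun h' => ((P.filter fun i => h' i = true), (Q.filter fun i => h' i = true)))
    (j := fun z => fun i => if i = focal then A' else decide (i ∈ z.1 ∪ z.2)) ?_ ?_ ?_ ?_ ?_
  · intro h' hh'
    rw [Finset.mem_filter] at hh'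
    obtain ⟨-, h1, h2, h3⟩ := hh'
    simp only [Finset.mem_product, Finset.mem_powersetCard]
    exact ⟨⟨Finset.filter_subset _ _, h2⟩, ⟨Finset.filter_subset _ _, h3⟩⟩
  · rintro ⟨S1, S2⟩ hz
    simp only [Finset.mem_product, Finset.mem_powersetCard] at hz
    obtain ⟨⟨hS1, hc1⟩, ⟨hS2, hc2⟩⟩ := hz
    rw [Finset.mem_filter]
    exact ⟨Finset.mem_univ _, by simp, by rw [filtP S1 S2 hS1 hS2]; exact hc1,
      by rw [filtQ S1 S2 hS1 hS2]; exact hc2⟩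
  · intro h' hh'
    rw [Finset.mem_filter] at hh'
    obtain ⟨-, h1, h2, h3⟩ := hh'
    funext i
    dsimp only
    by_cases hif : i = focal
    · subst hif; simp [h1]
    · rw [if_neg hif]
      have hiPQ : i ∈ P ∪ Q := by
        have : i ∈ insert focal (P ∪ Q) := huniv ▸ Finset.mem_univ i
        rcases Finset.mem_insert.mp this with h | h
        · exact absurd h hif
        · exact h
      by_cases hb : h' i = true
      · rw [hb]
        rw [decide_eq_true_eq]
        rcases Finset.mem_union.mp hiPQ with h | h
        · exact Finset.mem_union_left _ (Finset.mem_filter.mpr ⟨h, hb⟩)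
        · exact Finset.mem_union_right _ (Finset.mem_filter.mpr ⟨h, hb⟩)
      · simp only [Bool.not_eq_true] at hb
        rw [hb]
        rw [decide_eq_false_iff_not]
        intro hmem
        rcases Finset.mem_union.mp hmem with h | h
        · exact absurd (Finset.mem_filter.mp h).2 (by simp [hb])
        · exact absurd (Finset.mem_filter.mp h).2 (by simp [hb])
  · rintro ⟨S1, S2⟩ hz
    simp only [Finset.mem_product, Finset.mem_powersetCard] at hz
    obtain ⟨⟨hS1, hc1⟩, ⟨hS2, hc2⟩⟩ := hz
    dsimp only
    rw [filtP S1 S2 hS1 hS2, filtQ S1 S2 hS1 hS2]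
  · intro h' hh'
    rw [Finset.mem_filter] at hh'
    obtain ⟨-, h1, h2, h3⟩ := hh'
    dsimp only
    rw [show (Finset.univ : Finset ι) = insert focal (P ∪ Q) from huniv.symm,
      Finset.prod_insert hfPQ, Finset.prod_union hPQ, h1, ← mul_assoc]
    congr 1
    congr 1
    · refine Finset.prod_congr rfl fun i hi => ?_
      by_cases hb : h' i = true
      · rw [hb, if_pos (Finset.mem_filter.mpr ⟨hi, hb⟩)]
      · simp only [Bool.not_eq_true] at hb
        rw [hb, if_neg (fun hmem => by simpa [hb] using (Finset.mem_filter.mp hmem).2)]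
    · refine Finset.prod_congr rfl fun i hi => ?_
      by_cases hb : h' i = true
      · rw [hb, if_pos (Finset.mem_filter.mpr ⟨hi, hb⟩)]
      · simp only [Bool.not_eq_true] at hb
        rw [hb, if_neg (fun hmem => by simpa [hb] using (Finset.mem_filter.mp hmem).2)]

end AuxComb

section AuxStoch

lemma stoch_pow {α : Type*} [Fintype α] [DecidableEq α] (M : Matrix α α ℝ)
    (h1 : ∀ i j, 0 ≤ M i j) (h2 : ∀ i, ∑ j, M i j = 1) (t : ℕ) :
    (∀ i j, 0 ≤ (M ^ t) i j) ∧ ∀ i, ∑ j, (M ^ t) i j = 1 := by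
  induction t with
  | zero =>
    constructor
    · intro i j
      rw [pow_zero]
      by_cases h : i = j <;> simp [Matrix.one_apply, h]
    · intro i
      simp [pow_zero, Matrix.one_apply]
  | succ t ih =>
    obtain ⟨ihpos, ihrow⟩ := ih
    constructor
    · intro i j
      rw [pow_succ, Matrix.mul_apply]
      exact Finset.sum_nonneg fun l _ => mul_nonneg (ihpos i l) (h1 l j)
    · intro i
      simp only [pow_succ, Matrix.mul_apply]
      rw [Finset.sum_comm]
      calc ∑ l, ∑ j, (M ^ t) i l * M l j = ∑ l, (M ^ t) i l * ∑ j, M l j := by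
            simp [Finset.mul_sum]
        _ = 1 := by
            simp only [h2, mul_one]
            exact ihrow i

lemma discMean_lump {α β : Type*} [Fintype α] [Fintype β] [DecidableEq α] [DecidableEq β]
    (pr : α → β) (M : Matrix α α ℝ) (M' : Matrix β β ℝ) (w0 : α → ℝ) (mu0 : β → ℝ)
    (h0 : ∀ s, ∑ h ∈ Finset.univ.filter (fun h => pr h = s), w0 h = mu0 s)
    (hM : ∀ h s', ∑ h' ∈ Finset.univ.filter (fun h' => pr h' = s'), M h h' = M' (pr h) s')
    (hMpos : ∀ i j, 0 ≤ M i j) (hMrow : ∀ i, ∑ j, M i j = 1) (hw0 : ∀ h, 0 ≤ w0 h)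
    (delta : ℝ) (hd0 : 0 ≤ delta) (hd1 : delta < 1) (s : β) :
    ∑ h ∈ Finset.univ.filter (fun h => pr h = s), discMean delta w0 M h
      = discMean delta mu0 M' s := by
  have hst := stoch_pow M hMpos hMrow
  have hwt_pos : ∀ (t : ℕ) (h : α), 0 ≤ (w0 ᵥ* M ^ t) h := by
    intro t h
    simp only [Matrix.vecMul, dotProduct]
    exact Finset.sum_nonneg fun g _ => mul_nonneg (hw0 g) ((hst t).1 g h)
  have hwt_le : ∀ (t : ℕ) (h : α), (w0 ᵥ* M ^ t) h ≤ ∑ g, w0 g := by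
    intro t h
    simp only [Matrix.vecMul, dotProduct]
    refine Finset.sum_le_sum fun g _ => ?_
    have hle : (M ^ t) g h ≤ 1 := by
      calc (M ^ t) g h ≤ ∑ h', (M ^ t) g h' :=
            Finset.single_le_sum (fun h' _ => (hst t).1 g h') (Finset.mem_univ h)
        _ = 1 := (hst t).2 g
    calc w0 g * (M ^ t) g h ≤ w0 g * 1 := mul_le_mul_of_nonneg_left hle (hw0 g)
      _ = w0 g := mul_one _
  have hsumm : ∀ h : α, Summable (fun t : ℕ => delta ^ t * (w0 ᵥ* M ^ t) h) := by
    intro h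
    refine Summable.of_nonneg_of_le
      (fun t => mul_nonneg (pow_nonneg hd0 t) (hwt_pos t h))
      (fun t => ?_) ((summable_geometric_of_lt_one hd0 hd1).mul_right (∑ g, w0 g))
    calc delta ^ t * (w0 ᵥ* M ^ t) h ≤ delta ^ t * ∑ g, w0 g :=
          mul_le_mul_of_nonneg_left (hwt_le t h) (pow_nonneg hd0 t)
      _ = delta ^ t * ∑ g, w0 g := rfl
  unfold discMean
  rw [← Finset.mul_sum]
  congr 1
  rw [← Summable.tsum_finsetSum (fun h _ => hsumm h)]
  refine tsum_congr fun t => ?_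
  rw [← Finset.mul_sum, lump pr M M' w0 mu0 h0 hM t s]

end AuxStoch

/-- The focal player's discounted long-term payoff computed from the
full chain equals that computed from the reduced chain. -/
theorem payoff_full_eq_reduced_discounted (n k : ℕ) (hn : 2 ≤ n) (hk : k ≤ n - 1)
    (p q : Mem1) (hp : p.valid) (hq : q.valid)
    (focal : Fin n) (hfocal : (focal : ℕ) = 0)
    (assign : Fin n → Bool) (hassign : assign focal = true)
    (hcard : (Finset.univ.filter fun i => i ≠ focal ∧ assign i = true).card = k)
    (δ : ℝ) (hδ0 : 0 < δ) (hδ1 : δ < 1) (a b : ℕ → ℝ) :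
    ∑ h : FullState n,
        discMean δ (fullInit (strat2 p q assign)) (fullM (strat2 p q assign)) h *
          focalPayoff focal a b h
      = (∑ x : Fin (k+1), ∑ y : Fin (n-k),
           discMean δ (redInit n k p q) (redM n k p q) (true, x, y) * a ((x:ℕ) + (y:ℕ)))
        + ∑ x : Fin (k+1), ∑ y : Fin (n-k),
           discMean δ (redInit n k p q) (redM n k p q) (false, x, y) * b ((x:ℕ) + (y:ℕ)) := by
  classical
  set st : Fin n → Mem1 := strat2 p q assign with hst
  set P : Finset (Fin n) := Finset.univ.filter fun i => i ≠ focal ∧ assign i = true with hP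
  set Q : Finset (Fin n) := Finset.univ.filter fun i => i ≠ focal ∧ assign i = false with hQ
  have hPQd : Disjoint P Q := by
    rw [Finset.disjoint_left]
    intro i hiP hiQ
    rw [hP, Finset.mem_filter] at hiP
    rw [hQ, Finset.mem_filter] at hiQ
    rw [hiP.2.2] at hiQ
    exact absurd hiQ.2.2 (by simp)
  have hfP : focal ∉ P := by rw [hP]; simp
  have hfQ : focal ∉ Q := by rw [hQ]; simp [hassign]
  have huniv : insert focal (P ∪ Q) = (Finset.univ : Finset (Fin n)) := by
    ext i
    simp only [Finset.mem_insert, Finset.mem_union, hP, hQ, Finset.mem_filter,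
      Finset.mem_univ, true_and, iff_true]
    by_cases hif : i = focal
    · exact Or.inl hif
    · by_cases ha : assign i = true
      · exact Or.inr (Or.inl ⟨hif, ha⟩)
      · exact Or.inr (Or.inr ⟨hif, by simpa using ha⟩)
  have hfPQ : focal ∉ P ∪ Q := by simp [hfP, hfQ]
  have hQcard : Q.card = n - 1 - k := by
    have h1 : (insert focal (P ∪ Q)).card = n := by rw [huniv]; simp
    rw [Finset.card_insert_of_notMem hfPQ, Finset.card_union_of_disjoint hPQd, hcard] at h1
    omega
  have hxlt : ∀ h : FullState n, (P.filter fun i => h i = true).card < k + 1 := by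
    intro h
    have := Finset.card_filter_le P (fun i => h i = true)
    omega
  have hylt : ∀ h : FullState n, (Q.filter fun i => h i = true).card < n - k := by
    intro h
    have := Finset.card_filter_le Q (fun i => h i = true)
    omega
  set pr : FullState n → Bool × Fin (k+1) × Fin (n-k) :=
    fun h => (h focal, ⟨_, hxlt h⟩, ⟨_, hylt h⟩) with hpr
  have fiber_eq : ∀ (A : Bool) (x : Fin (k+1)) (y : Fin (n-k)),
      Finset.univ.filter (fun h => pr h = (A,x,y)) =
      Finset.univ.filter (fun h : FullState n => h focal = A ∧
        (P.filter fun i => h i = true).card = ↑x ∧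
        (Q.filter fun i => h i = true).card = ↑y) := by
    intro A x y
    ext h
    simp [hpr, Prod.ext_iff, Fin.ext_iff]
  have hσ : ∀ h : FullState n, nCoop h = (if h focal then 1 else 0)
      + (P.filter fun i => h i = true).card + (Q.filter fun i => h i = true).card := by
    intro h
    unfold nCoop
    rw [Finset.card_filter, Finset.card_filter, Finset.card_filter,
      show (Finset.univ : Finset (Fin n)) = insert focal (P ∪ Q) from huniv.symm,
      Finset.sum_insert hfPQ, Finset.sum_union hPQd]
    ring
  have hstP : ∀ i ∈ P, st i = p := by
    intro i hi
    rw [hP, Finset.mem_filter] at hi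
    rw [hst]; unfold strat2; rw [hi.2.2]; simp
  have hstQ : ∀ i ∈ Q, st i = q := by
    intro i hi
    rw [hQ, Finset.mem_filter] at hi
    rw [hst]; unfold strat2; rw [hi.2.2]; simp
  have hstF : st focal = p := by rw [hst]; unfold strat2; rw [hassign]; simp
  have hcond01 : ∀ i A j, 0 ≤ (st i).cond A j ∧ (st i).cond A j ≤ 1 := by
    intro i A j
    rw [hst]; unfold strat2
    by_cases ha : assign i
    · rw [ha]; simp only [if_true]
      exact ⟨(hp.2 A j).1, (hp.2 A j).2⟩
    · simp only [ha, if_false]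
      exact ⟨(hq.2 A j).1, (hq.2 A j).2⟩
  -- initial condition
  have hinit : ∀ s : Bool × Fin (k+1) × Fin (n-k),
      ∑ h ∈ Finset.univ.filter (fun h => pr h = s), fullInit st h = redInit n k p q s := by
    have habs : ∀ (r : ℝ), 0 ≤ r → r ≤ 1 → ∀ b : Bool,
        |1 - (if b then (1:ℝ) else 0) - r| = if b then r else 1 - r := by
      intro r h0 h1 b
      cases b
      · rw [if_neg (by simp), if_neg (by simp), abs_of_nonneg (by linarith)]; ring
      · rw [if_pos rfl, if_pos rfl, abs_of_nonpos (by linarith)]; ring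
    rintro ⟨A, x, y⟩
    rw [fiber_eq A x y]
    have e1 : ∀ i ∈ P, (fun (i : Fin n) (b : Bool) =>
        |1 - (if b then (1:ℝ) else 0) - (st i).init|) i true = p.init ∧
        (fun (i : Fin n) (b : Bool) =>
        |1 - (if b then (1:ℝ) else 0) - (st i).init|) i false = 1 - p.init := by
      intro i hi
      dsimp only
      rw [hstP i hi]
      constructor
      · rw [habs p.init hp.1.1 hp.1.2 true, if_pos rfl]
      · rw [habs p.init hp.1.1 hp.1.2 false, if_neg (by simp)]
    have e2 : ∀ i ∈ Q, (fun (i : Fin n) (b : Bool) =>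
        |1 - (if b then (1:ℝ) else 0) - (st i).init|) i true = q.init ∧
        (fun (i : Fin n) (b : Bool) =>
        |1 - (if b then (1:ℝ) else 0) - (st i).init|) i false = 1 - q.init := by
      intro i hi
      dsimp only
      rw [hstQ i hi]
      constructor
      · rw [habs q.init hq.1.1 hq.1.2 true, if_pos rfl]
      · rw [habs q.init hq.1.1 hq.1.2 false, if_neg (by simp)]
    refine Eq.trans (fiber_prod_sum focal P Q hPQd hfP hfQ huniv A ↑x ↑y
      (fun i b => |1 - (if b then (1:ℝ) else 0) - (st i).init|)) ?_
    rw [const_sum P (fun (i : Fin n) (b : Bool) =>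
        |1 - (if b then (1:ℝ) else 0) - (st i).init|) p.init e1 ↑x,
      const_sum Q (fun (i : Fin n) (b : Bool) =>
        |1 - (if b then (1:ℝ) else 0) - (st i).init|) q.init e2 ↑y, hcard, hQcard, hstF]
    rfl
  -- step condition
  have hstep : ∀ (h : FullState n) (s' : Bool × Fin (k+1) × Fin (n-k)),
      ∑ h' ∈ Finset.univ.filter (fun h' => pr h' = s'), fullM st h h'
        = redM n k p q (pr h) s' := by
    intro h
    rintro ⟨A', x', y'⟩
    have hσh := hσ h
    rw [fiber_eq A' x' y']
    refine Eq.trans (fiber_prod_sum focal P Q hPQd hfP hfQ huniv A' ↑x' ↑y'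
      (fun i b => if b then (st i).cond (h i) (nCoop h - if h i then 1 else 0)
        else 1 - (st i).cond (h i) (nCoop h - if h i then 1 else 0))) ?_
    have hP1 : ∀ i ∈ P.filter fun i => h i = true,
        (fun (i : Fin n) (b : Bool) => if b then (st i).cond (h i) (nCoop h - if h i then 1 else 0)
          else 1 - (st i).cond (h i) (nCoop h - if h i then 1 else 0)) i true
          = p.cond true ((P.filter fun i => h i = true).card + (Q.filter fun i => h i = true).card
              + (if h focal then 1 else 0) - 1) ∧
        (fun (i : Fin n) (b : Bool) => if b then (st i).cond (h i) (nCoop h - if h i then 1 else 0)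
          else 1 - (st i).cond (h i) (nCoop h - if h i then 1 else 0)) i false
          = 1 - p.cond true ((P.filter fun i => h i = true).card + (Q.filter fun i => h i = true).card
              + (if h focal then 1 else 0) - 1) := by
      intro i hi
      rw [Finset.mem_filter] at hi
      have hci : (st i).cond (h i) (nCoop h - if h i then 1 else 0)
          = p.cond true ((P.filter fun i => h i = true).card
              + (Q.filter fun i => h i = true).card + (if h focal then 1 else 0) - 1) := by
        rw [hstP i hi.1, hi.2]
        congr 1
        cases hf : h focal <;> simp [hf] at hσh ⊢ <;> omega
      refine ⟨?_, ?_⟩ <;> dsimp only <;> rw [hci] <;> simp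
    have hP2 : ∀ i ∈ P \ (P.filter fun i => h i = true),
        (fun (i : Fin n) (b : Bool) => if b then (st i).cond (h i) (nCoop h - if h i then 1 else 0)
          else 1 - (st i).cond (h i) (nCoop h - if h i then 1 else 0)) i true
          = p.cond false ((P.filter fun i => h i = true).card + (Q.filter fun i => h i = true).card
              + (if h focal then 1 else 0)) ∧
        (fun (i : Fin n) (b : Bool) => if b then (st i).cond (h i) (nCoop h - if h i then 1 else 0)
          else 1 - (st i).cond (h i) (nCoop h - if h i then 1 else 0)) i false
          = 1 - p.cond false ((P.filter fun i => h i = true).card + (Q.filter fun i => h i = true).card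
              + (if h focal then 1 else 0)) := by
      intro i hi
      rw [Finset.mem_sdiff] at hi
      have hif : h i = false := by
        by_contra hc
        simp only [Bool.not_eq_false] at hc
        exact hi.2 (Finset.mem_filter.mpr ⟨hi.1, hc⟩)
      have hci : (st i).cond (h i) (nCoop h - if h i then 1 else 0)
          = p.cond false ((P.filter fun i => h i = true).card
              + (Q.filter fun i => h i = true).card + (if h focal then 1 else 0)) := by
        rw [hstP i hi.1, hif]
        congr 1
        cases hf : h focal <;> simp [hf] at hσh ⊢ <;> omega
      refine ⟨?_, ?_⟩ <;> dsimp only <;> rw [hci] <;> simp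
    have hQ1 : ∀ i ∈ Q.filter fun i => h i = true,
        (fun (i : Fin n) (b : Bool) => if b then (st i).cond (h i) (nCoop h - if h i then 1 else 0)
          else 1 - (st i).cond (h i) (nCoop h - if h i then 1 else 0)) i true
          = q.cond true ((P.filter fun i => h i = true).card + (Q.filter fun i => h i = true).card
              + (if h focal then 1 else 0) - 1) ∧
        (fun (i : Fin n) (b : Bool) => if b then (st i).cond (h i) (nCoop h - if h i then 1 else 0)
          else 1 - (st i).cond (h i) (nCoop h - if h i then 1 else 0)) i false
          = 1 - q.cond true ((P.filter fun i => h i = true).card + (Q.filter fun i => h i = true).card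
              + (if h focal then 1 else 0) - 1) := by
      intro i hi
      rw [Finset.mem_filter] at hi
      have hci : (st i).cond (h i) (nCoop h - if h i then 1 else 0)
          = q.cond true ((P.filter fun i => h i = true).card
              + (Q.filter fun i => h i = true).card + (if h focal then 1 else 0) - 1) := by
        rw [hstQ i hi.1, hi.2]
        congr 1
        cases hf : h focal <;> simp [hf] at hσh ⊢ <;> omega
      refine ⟨?_, ?_⟩ <;> dsimp only <;> rw [hci] <;> simp
    have hQ2 : ∀ i ∈ Q \ (Q.filter fun i => h i = true),
        (fun (i : Fin n) (b : Bool) => if b then (st i).cond (h i) (nCoop h - if h i then 1 else 0)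
          else 1 - (st i).cond (h i) (nCoop h - if h i then 1 else 0)) i true
          = q.cond false ((P.filter fun i => h i = true).card + (Q.filter fun i => h i = true).card
              + (if h focal then 1 else 0)) ∧
        (fun (i : Fin n) (b : Bool) => if b then (st i).cond (h i) (nCoop h - if h i then 1 else 0)
          else 1 - (st i).cond (h i) (nCoop h - if h i then 1 else 0)) i false
          = 1 - q.cond false ((P.filter fun i => h i = true).card + (Q.filter fun i => h i = true).card
              + (if h focal then 1 else 0)) := by
      intro i hi
      rw [Finset.mem_sdiff] at hi
      have hif : h i = false := by
        by_contra hc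
        simp only [Bool.not_eq_false] at hc
        exact hi.2 (Finset.mem_filter.mpr ⟨hi.1, hc⟩)
      have hci : (st i).cond (h i) (nCoop h - if h i then 1 else 0)
          = q.cond false ((P.filter fun i => h i = true).card
              + (Q.filter fun i => h i = true).card + (if h focal then 1 else 0)) := by
        rw [hstQ i hi.1, hif]
        congr 1
        cases hf : h focal <;> simp [hf] at hσh ⊢ <;> omega
      refine ⟨?_, ?_⟩ <;> dsimp only <;> rw [hci] <;> simp
    rw [transfer_sum P (P.filter fun i => h i = true) (Finset.filter_subset _ _)
        (fun (i : Fin n) (b : Bool) => if b then (st i).cond (h i) (nCoop h - if h i then 1 else 0)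
          else 1 - (st i).cond (h i) (nCoop h - if h i then 1 else 0)) _ _ hP1 hP2 ↑x',
      transfer_sum Q (Q.filter fun i => h i = true) (Finset.filter_subset _ _)
        (fun (i : Fin n) (b : Bool) => if b then (st i).cond (h i) (nCoop h - if h i then 1 else 0)
          else 1 - (st i).cond (h i) (nCoop h - if h i then 1 else 0)) _ _ hQ1 hQ2 ↑y',
      hcard, hQcard]
    have eF : (if A' then (st focal).cond (h focal) (nCoop h - if h focal then 1 else 0)
          else 1 - (st focal).cond (h focal) (nCoop h - if h focal then 1 else 0))
        = |1 - (if A' then (1:ℝ) else 0)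
            - p.cond (h focal) ((P.filter fun i => h i = true).card
              + (Q.filter fun i => h i = true).card)| := by
      have ecF : (st focal).cond (h focal) (nCoop h - if h focal then 1 else 0)
          = p.cond (h focal) ((P.filter fun i => h i = true).card
              + (Q.filter fun i => h i = true).card) := by
        rw [hstF]
        congr 1
        cases hf : h focal <;> simp [hf] at hσh ⊢ <;> omega
      rw [ecF]
      set c := p.cond (h focal) ((P.filter fun i => h i = true).card
              + (Q.filter fun i => h i = true).card) with hc
      have hc0 : 0 ≤ c := (hp.2 _ _).1
      have hc1 : c ≤ 1 := (hp.2 _ _).2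
      cases A'
      · rw [if_neg (by simp), if_neg (by simp), abs_of_nonneg (by linarith)]
        ring
      · rw [if_pos rfl, if_pos rfl, abs_of_nonpos (by linarith)]
        ring
    rw [eF]
    rfl
  -- stochasticity of fullM
  have hMpos : ∀ g h, 0 ≤ fullM st g h := by
    intro g h
    unfold fullM
    rw [Matrix.of_apply]
    refine Finset.prod_nonneg fun i _ => ?_
    by_cases hb : h i = true
    · rw [if_pos hb]; exact (hcond01 i _ _).1
    · rw [if_neg hb]; linarith [(hcond01 i (g i) (nCoop g - if g i then 1 else 0)).2]
  have hMrow : ∀ g, ∑ h, fullM st g h = 1 := by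
    intro g
    unfold fullM
    simp only [Matrix.of_apply]
    have key := Finset.prod_univ_sum (fun _ : Fin n => (Finset.univ : Finset Bool))
      (fun i b => if b = true then (st i).cond (g i) (nCoop g - if g i then 1 else 0)
        else 1 - (st i).cond (g i) (nCoop g - if g i then 1 else 0))
    rw [Fintype.piFinset_univ] at key
    refine Eq.trans key.symm ?_
    rw [Finset.prod_eq_one]
    intro i _
    rw [Fintype.sum_bool]
    simp
  have hv0pos : ∀ h, 0 ≤ fullInit st h := by
    intro h
    exact Finset.prod_nonneg fun i _ => abs_nonneg _
  have main : ∀ s : Bool × Fin (k+1) × Fin (n-k),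
      ∑ h ∈ Finset.univ.filter (fun h => pr h = s),
        discMean δ (fullInit st) (fullM st) h
        = discMean δ (redInit n k p q) (redM n k p q) s :=
    discMean_lump pr (fullM st) (redM n k p q) (fullInit st) (redInit n k p q)
      hinit hstep hMpos hMrow hv0pos δ hδ0.le hδ1
  -- payoff is constant on fibers
  have hpay : ∀ (A : Bool) (x : Fin (k+1)) (y : Fin (n-k)),
      ∀ h ∈ Finset.univ.filter (fun h => pr h = (A,x,y)),
      focalPayoff focal a b h = if A then a (↑x + ↑y) else b (↑x + ↑y) := by
    intro A x y h hh
    rw [fiber_eq A x y, Finset.mem_filter] at hh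
    obtain ⟨-, h1, h2, h3⟩ := hh
    have hσh := hσ h
    rw [h1, h2, h3] at hσh
    unfold focalPayoff
    rw [h1]
    by_cases hA : A = true
    · rw [hA] at hσh ⊢
      simp only [if_true] at hσh ⊢
      congr 1
      omega
    · simp only [Bool.not_eq_true] at hA
      rw [hA] at hσh ⊢
      simp only [if_false, Bool.false_eq_true] at hσh ⊢
      congr 1
      omega
  -- assemble
  calc ∑ h : FullState n, discMean δ (fullInit st) (fullM st) h * focalPayoff focal a b h
      = ∑ s : Bool × Fin (k+1) × Fin (n-k), ∑ h ∈ Finset.univ.filter (fun h => pr h = s),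
          discMean δ (fullInit st) (fullM st) h * focalPayoff focal a b h :=
        (Finset.sum_fiberwise Finset.univ pr _).symm
    _ = ∑ s : Bool × Fin (k+1) × Fin (n-k),
          discMean δ (redInit n k p q) (redM n k p q) s *
            (if s.1 then a (↑s.2.1 + ↑s.2.2) else b (↑s.2.1 + ↑s.2.2)) := by
        refine Finset.sum_congr rfl fun s _ => ?_
        obtain ⟨A, x, y⟩ := s
        rw [← main (A,x,y), Finset.sum_mul]
        refine Finset.sum_congr rfl fun h hh => ?_
        rw [hpay A x y h hh]
    _ = (∑ x : Fin (k+1), ∑ y : Fin (n-k),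
           discMean δ (redInit n k p q) (redM n k p q) (true, x, y) * a ((x:ℕ) + (y:ℕ)))
        + ∑ x : Fin (k+1), ∑ y : Fin (n-k),
           discMean δ (redInit n k p q) (redM n k p q) (false, x, y) * b ((x:ℕ) + (y:ℕ)) := by
        simp only [Fintype.sum_prod_type, Fintype.sum_bool]
        simp
end
end

section
/- For every round t ≥ 0, every focal action A ∈ {C,D} and every tuple (x_1,…,x_m) with x_i ∈ {0,…,k_i}, the clustered distribution after t steps of the m-strategy reduced chain equals the aggregated full-chain distribution: (ν(0) (M'')^t)_{(A,x_1,…,x_m)} = Σ_{h ∈ A_{A,x_1,…,x_m}} (v(0) M^t)_h. -/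
open Finset Matrix
open scoped Classical

noncomputable section

/-- Strategy assignment for `m` strategies: player `i` uses strategy `ps (assign i)`. -/
def stratM {n m : ℕ} (ps : Fin m → Mem1) (assign : Fin n → Fin m) : Fin n → Mem1 :=
  fun i => ps (assign i)

/-- The clustered state space for `m` strategies: the focal action together with, for
each strategy index `i`, the number `x i ∈ {0,…,k_i}` of cooperators among the `k_i`
co-players using strategy `i`. -/
abbrev RStateM {m : ℕ} (ks : Fin m → ℕ) := Bool × ((i : Fin m) → Fin (ks i + 1))

/-- The cluster `A_{A,x_1,…,x_m}`: full states in which the focal player plays `A` and,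
for every `i`, exactly `x i` of the co-players using strategy `i` cooperate. -/
def clusterM {n m : ℕ} (focal : Fin n) (assign : Fin n → Fin m) (ks : Fin m → ℕ)
    (A : Bool) (x : (i : Fin m) → Fin (ks i + 1)) : Finset (FullState n) :=
  Finset.univ.filter fun h =>
    h focal = A ∧
    ∀ i, (Finset.univ.filter fun j => j ≠ focal ∧ assign j = i ∧ h j = true).card = (x i : ℕ)

/-- The `m`-strategy reduced transition matrix `M''` on the `2 ∏ (k_i+1)` clustered
states, for a focal player using strategy `ps i0`. -/
def redMM {m : ℕ} (ps : Fin m → Mem1) (ks : Fin m → ℕ) (i0 : Fin m) :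
    Matrix (RStateM ks) (RStateM ks) ℝ :=
  Matrix.of fun s s' =>
    match s, s' with
    | (A, x), (A', x') =>
      |1 - (if A' then (1:ℝ) else 0) - (ps i0).cond A (∑ i, (x i : ℕ))| *
      ∏ i, transfer ((ps i).cond true ((∑ i', (x i' : ℕ)) + (if A then 1 else 0) - 1))
                    ((ps i).cond false ((∑ i', (x i' : ℕ)) + (if A then 1 else 0)))
                    (x i : ℕ) (ks i) (x' i : ℕ)

/-- The initial clustered distribution `ν(0)` for `m` strategies. -/
def redInitM {m : ℕ} (ps : Fin m → Mem1) (ks : Fin m → ℕ) (i0 : Fin m) :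
    RStateM ks → ℝ :=
  fun s => match s with
  | (A, x) =>
    |1 - (if A then (1:ℝ) else 0) - (ps i0).init| *
    ∏ i, (((ks i).choose (x i : ℕ) : ℝ) * (ps i).init ^ (x i : ℕ) *
          (1 - (ps i).init) ^ (ks i - (x i : ℕ)))


namespace StateClusteringAux

lemma abs_prob (A' : Bool) (p : ℝ) (h0 : 0 ≤ p) (h1 : p ≤ 1) :
    |1 - (if A' then (1:ℝ) else 0) - p| = if A' then p else 1 - p := by
  cases A'
  · simp only [Bool.false_eq_true, if_false]
    rw [abs_of_nonneg (by linarith)]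
    ring
  · simp only [if_true]
    rw [show (1:ℝ) - 1 - p = -p by ring, abs_neg, abs_of_nonneg h0]

variable {ι : Type*} [DecidableEq ι]

lemma prod_ite_mem_const (P g : Finset ι) (hg : g ⊆ P) (a b : ℝ) :
    (∏ u ∈ P, if u ∈ g then a else b) = a ^ g.card * b ^ (P.card - g.card) := by
  have h1 : P.filter (· ∈ g) = g := by
    rw [Finset.filter_mem_eq_inter]; exact Finset.inter_eq_right.mpr hg
  have h2 : P.filter (fun u => ¬ u ∈ g) = P \ g := by
    rw [Finset.filter_not, h1]
  rw [← Finset.prod_filter_mul_prod_filter_not P (· ∈ g), h1, h2]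
  rw [Finset.prod_congr rfl (fun u hu => if_pos hu),
      Finset.prod_congr rfl (fun u (hu : u ∈ P \ g) => if_neg (Finset.mem_sdiff.mp hu).2),
      Finset.prod_const, Finset.prod_const, Finset.card_sdiff_of_subset hg]

lemma sum_powersetCard_const (s : Finset ι) (q : ℝ) (x' : ℕ) :
    (∑ g ∈ s.powersetCard x', ∏ u ∈ s, if u ∈ g then q else 1 - q)
    = (s.card.choose x' : ℝ) * q ^ x' * (1 - q) ^ (s.card - x') := by
  have h : ∀ g ∈ s.powersetCard x',
      (∏ u ∈ s, if u ∈ g then q else 1 - q) = q ^ x' * (1 - q) ^ (s.card - x') := by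
    intro g hg
    obtain ⟨hsub, hcard⟩ := Finset.mem_powersetCard.mp hg
    rw [prod_ite_mem_const s g hsub, hcard]
  rw [Finset.sum_congr rfl h, Finset.sum_const, Finset.card_powersetCard, nsmul_eq_mul]
  ring

lemma sum_powersetCard_prod (s : Finset ι) (Q : ι → Prop) [DecidablePred Q]
    (pc pd : ℝ) (x' : ℕ) :
    (∑ g ∈ s.powersetCard x', ∏ u ∈ s,
      if u ∈ g then (if Q u then pc else pd) else (if Q u then 1 - pc else 1 - pd))
    = transfer pc pd (s.filter Q).card s.card x' := by
  set P := s.filter Q with hP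
  set R := s.filter (fun u => ¬ Q u) with hR
  have hPsub : P ⊆ s := Finset.filter_subset _ _
  have hRsub : R ⊆ s := Finset.filter_subset _ _
  have hPR : Disjoint P R := by
    rw [Finset.disjoint_left]
    intro a ha ha'
    exact (Finset.mem_filter.mp ha').2 (Finset.mem_filter.mp ha).2
  have hUnion : P ∪ R = s := Finset.filter_union_filter_not_eq _ _
  have hRcard : R.card = s.card - P.card := by
    have := Finset.card_union_of_disjoint hPR
    rw [hUnion] at this
    omega
  have hsdiff : s \ P = R := by
    rw [hR, Finset.filter_not]
  have key : (∑ g ∈ s.powersetCard x', ∏ u ∈ s,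
      if u ∈ g then (if Q u then pc else pd) else (if Q u then 1 - pc else 1 - pd))
      = ∑ p ∈ (Finset.range (x'+1)).sigma
          (fun j => P.powersetCard j ×ˢ R.powersetCard (x'-j)),
          ∏ u ∈ s, if u ∈ p.2.1 ∪ p.2.2 then (if Q u then pc else pd)
                   else (if Q u then 1 - pc else 1 - pd) := by
    refine Finset.sum_nbij' (fun g => ⟨(g ∩ P).card, (g ∩ P, g \ P)⟩)
      (fun p => p.2.1 ∪ p.2.2) ?_ ?_ ?_ ?_ ?_
    · intro g hg
      obtain ⟨hsub, hcard⟩ := Finset.mem_powersetCard.mp hg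
      have hsplit := Finset.card_inter_add_card_sdiff g P
      rw [Finset.mem_sigma, Finset.mem_range, Finset.mem_product]
      dsimp only
      refine ⟨by omega, ?_, ?_⟩
      · exact Finset.mem_powersetCard.mpr ⟨Finset.inter_subset_right, rfl⟩
      · refine Finset.mem_powersetCard.mpr ⟨?_, by omega⟩
        rw [← hsdiff]
        exact Finset.sdiff_subset_sdiff hsub le_rfl
    · intro p hp
      rw [Finset.mem_sigma, Finset.mem_range, Finset.mem_product] at hp
      obtain ⟨hj, h1, h2⟩ := hp
      obtain ⟨h1s, h1c⟩ := Finset.mem_powersetCard.mp h1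
      obtain ⟨h2s, h2c⟩ := Finset.mem_powersetCard.mp h2
      refine Finset.mem_powersetCard.mpr ⟨Finset.union_subset (h1s.trans hPsub) (h2s.trans hRsub), ?_⟩
      rw [Finset.card_union_of_disjoint (Finset.disjoint_of_subset_left h1s
        (Finset.disjoint_of_subset_right h2s hPR))]
      omega
    · intro g hg
      simp only
      rw [Finset.union_comm, Finset.sdiff_union_inter]
    · rintro ⟨j, g1, g2⟩ hp
      rw [Finset.mem_sigma, Finset.mem_range, Finset.mem_product] at hp
      obtain ⟨hj, h1, h2⟩ := hp
      obtain ⟨h1s, h1c⟩ := Finset.mem_powersetCard.mp h1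
      obtain ⟨h2s, h2c⟩ := Finset.mem_powersetCard.mp h2
      have hg2P : Disjoint g2 P := Finset.disjoint_of_subset_left h2s hPR.symm
      have e1 : (g1 ∪ g2) ∩ P = g1 := by
        rw [Finset.union_inter_distrib_right, Finset.inter_eq_left.mpr h1s,
          Finset.disjoint_iff_inter_eq_empty.mp hg2P, Finset.union_empty]
      have e2 : (g1 ∪ g2) \ P = g2 := by
        rw [Finset.union_sdiff_distrib, Finset.sdiff_eq_empty_iff_subset.mpr h1s,
          Finset.sdiff_eq_self_of_disjoint hg2P, Finset.empty_union]
      simp [e1, e2, h1c]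
    · intro g hg
      simp only
      rw [Finset.union_comm, Finset.sdiff_union_inter]
  rw [key, Finset.sum_sigma]
  unfold transfer
  refine Finset.sum_congr rfl fun j hj => ?_
  rw [Finset.mem_range] at hj
  rw [Finset.sum_product]
  have inner : ∀ g1 ∈ P.powersetCard j, ∀ g2 ∈ R.powersetCard (x'-j),
      (∏ u ∈ s, if u ∈ g1 ∪ g2 then (if Q u then pc else pd)
        else (if Q u then 1 - pc else 1 - pd))
      = (pc ^ j * (1-pc) ^ (P.card - j)) * (pd ^ (x'-j) * (1-pd) ^ (R.card - (x'-j))) := by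
    intro g1 h1 g2 h2
    obtain ⟨h1s, h1c⟩ := Finset.mem_powersetCard.mp h1
    obtain ⟨h2s, h2c⟩ := Finset.mem_powersetCard.mp h2
    rw [← hUnion, Finset.prod_union hPR]
    have eP : ∀ u ∈ P, (if u ∈ g1 ∪ g2 then (if Q u then pc else pd)
        else (if Q u then 1 - pc else 1 - pd)) = (if u ∈ g1 then pc else 1 - pc) := by
      intro u hu
      have hQ : Q u := (Finset.mem_filter.mp hu).2
      have hmem : u ∈ g1 ∪ g2 ↔ u ∈ g1 := by
        rw [Finset.mem_union, or_iff_left_iff_imp]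
        intro hu2
        exact absurd hu (Finset.disjoint_right.mp hPR (h2s hu2))
      by_cases hg : u ∈ g1
      · rw [if_pos (hmem.mpr hg), if_pos hQ, if_pos hg]
      · rw [if_neg (fun c => hg (hmem.mp c)), if_pos hQ, if_neg hg]
    have eR : ∀ u ∈ R, (if u ∈ g1 ∪ g2 then (if Q u then pc else pd)
        else (if Q u then 1 - pc else 1 - pd)) = (if u ∈ g2 then pd else 1 - pd) := by
      intro u hu
      have hQ : ¬ Q u := (Finset.mem_filter.mp hu).2
      have hmem : u ∈ g1 ∪ g2 ↔ u ∈ g2 := by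
        rw [Finset.mem_union, or_iff_right_iff_imp]
        intro hu1
        exact absurd hu (Finset.disjoint_left.mp hPR (h1s hu1))
      by_cases hg : u ∈ g2
      · rw [if_pos (hmem.mpr hg), if_neg hQ, if_pos hg]
      · rw [if_neg (fun c => hg (hmem.mp c)), if_neg hQ, if_neg hg]
    rw [Finset.prod_congr rfl eP, Finset.prod_congr rfl eR,
      prod_ite_mem_const P g1 h1s, prod_ite_mem_const R g2 h2s, h1c, h2c]
  rw [Finset.sum_congr rfl fun g1 h1 => Finset.sum_congr rfl fun g2 h2 => inner g1 h1 g2 h2]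
  rw [Finset.sum_const, Finset.sum_const, Finset.card_powersetCard, Finset.card_powersetCard,
    nsmul_eq_mul, nsmul_eq_mul, hRcard]
  ring

variable {n m : ℕ}

def blk (focal : Fin n) (assign : Fin n → Fin m) (i : Fin m) : Finset (Fin n) :=
  Finset.univ.filter fun j => j ≠ focal ∧ assign j = i

lemma blk_disjoint (focal : Fin n) (assign : Fin n → Fin m) {i i' : Fin m} (h : i ≠ i') :
    Disjoint (blk focal assign i) (blk focal assign i') := by
  rw [Finset.disjoint_left]
  intro a ha ha'
  exact h ((Finset.mem_filter.mp ha).2.2 ▸ (Finset.mem_filter.mp ha').2.2 ▸ rfl)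

lemma biUnion_blk (focal : Fin n) (assign : Fin n → Fin m) :
    Finset.univ.biUnion (blk focal assign) = Finset.univ.erase focal := by
  ext j
  simp [blk, Finset.mem_erase]

lemma cnt_filter_eq (focal : Fin n) (assign : Fin n → Fin m) (h : FullState n) (i : Fin m) :
    ((blk focal assign i).filter fun j => h j = true)
      = Finset.univ.filter fun j => j ≠ focal ∧ assign j = i ∧ h j = true := by
  rw [blk, Finset.filter_filter]
  simp only [and_assoc]

lemma nCoop_eq (focal : Fin n) (assign : Fin n → Fin m) (h : FullState n) :
    nCoop h = (if h focal then 1 else 0)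
      + ∑ i, ((blk focal assign i).filter fun j => h j = true).card := by
  have hu : (Finset.univ : Finset (Fin n)) = insert focal (Finset.univ.erase focal) :=
    (Finset.insert_erase (Finset.mem_univ focal)).symm
  have hb : ((Finset.univ.erase focal).filter fun j => h j = true)
      = Finset.univ.biUnion (fun i => (blk focal assign i).filter fun j => h j = true) := by
    rw [← biUnion_blk focal assign, Finset.filter_biUnion]
  have hcb : ((Finset.univ.erase focal).filter fun j => h j = true).card
      = ∑ i, ((blk focal assign i).filter fun j => h j = true).card := by
    rw [hb]
    exact Finset.card_biUnion fun i _ i' _ hii' =>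
      Finset.disjoint_filter_filter (blk_disjoint focal assign hii')
  rw [nCoop, hu, Finset.filter_insert]
  by_cases hf : h focal = true
  · rw [if_pos hf, if_pos hf, Finset.card_insert_of_notMem (by simp), hcb]
    omega
  · rw [if_neg hf, if_neg hf, hcb]
    omega

lemma sum_cluster (focal : Fin n) (assign : Fin n → Fin m) (ks : Fin m → ℕ)
    (A' : Bool) (x' : (i : Fin m) → Fin (ks i + 1)) (w : Fin n → Bool → ℝ) :
    (∑ h ∈ clusterM focal assign ks A' x', ∏ j, w j (h j))
    = w focal A' *
      ∏ i, ∑ g ∈ (blk focal assign i).powersetCard (x' i : ℕ),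
        ∏ u ∈ blk focal assign i, (if u ∈ g then w u true else w u false) := by
  have step1 : (∑ h ∈ clusterM focal assign ks A' x', ∏ j, w j (h j))
      = ∑ g ∈ Fintype.piFinset (fun i => (blk focal assign i).powersetCard (x' i : ℕ)),
          ∏ j, w j (if j = focal then A' else if j ∈ g (assign j) then true else false) := by
    refine Finset.sum_nbij'
      (fun h => fun i => (blk focal assign i).filter fun j => h j = true)
      (fun g => fun j => if j = focal then A' else if j ∈ g (assign j) then true else false)
      ?_ ?_ ?_ ?_ ?_
    · intro h hh
      obtain ⟨-, hfoc, hcnt⟩ := Finset.mem_filter.mp hh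
      rw [Fintype.mem_piFinset]
      intro i
      refine Finset.mem_powersetCard.mpr ⟨Finset.filter_subset _ _, ?_⟩
      rw [cnt_filter_eq]
      exact hcnt i
    · intro g hg
      rw [Fintype.mem_piFinset] at hg
      refine Finset.mem_filter.mpr ⟨Finset.mem_univ _, if_pos rfl, fun i => ?_⟩
      have hsub : g i ⊆ blk focal assign i := (Finset.mem_powersetCard.mp (hg i)).1
      have hcd : (g i).card = (x' i : ℕ) := (Finset.mem_powersetCard.mp (hg i)).2
      have : (Finset.univ.filter fun j => j ≠ focal ∧ assign j = i ∧
          (if j = focal then A' else if j ∈ g (assign j) then true else false) = true) = g i := by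
        ext j
        simp only [Finset.mem_filter, Finset.mem_univ, true_and]
        constructor
        · rintro ⟨hjf, hja, hjt⟩
          rw [if_neg hjf, hja] at hjt
          by_cases hjg : j ∈ g i
          · exact hjg
          · rw [if_neg hjg] at hjt; exact absurd hjt (by simp)
        · intro hjg
          have hjb := hsub hjg
          obtain ⟨-, hjf, hja⟩ := Finset.mem_filter.mp hjb
          exact ⟨hjf, hja, by rw [if_neg hjf, hja, if_pos hjg]⟩
      rw [this, hcd]
    · intro h hh
      obtain ⟨-, hfoc, hcnt⟩ := Finset.mem_filter.mp hh
      funext j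
      dsimp only
      by_cases hjf : j = focal
      · subst hjf; rw [if_pos rfl, hfoc]
      · rw [if_neg hjf]
        have hjb : j ∈ blk focal assign (assign j) :=
          Finset.mem_filter.mpr ⟨Finset.mem_univ _, hjf, rfl⟩
        by_cases hjt : h j = true
        · rw [if_pos (Finset.mem_filter.mpr ⟨hjb, hjt⟩), hjt]
        · have hnm : j ∉ Finset.filter (fun j => h j = true) (blk focal assign (assign j)) :=
            fun c => hjt (Finset.mem_filter.mp c).2
          simp [hnm, Bool.eq_false_iff.mpr hjt]
    · intro g hg
      rw [Fintype.mem_piFinset] at hg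
      funext i
      dsimp only
      have hsub : g i ⊆ blk focal assign i := (Finset.mem_powersetCard.mp (hg i)).1
      ext j
      simp only [Finset.mem_filter]
      constructor
      · rintro ⟨hjb, hjt⟩
        obtain ⟨-, hjf, hja⟩ := Finset.mem_filter.mp hjb
        rw [if_neg hjf, hja] at hjt
        by_cases hjg : j ∈ g i
        · exact hjg
        · rw [if_neg hjg] at hjt; exact absurd hjt (by simp)
      · intro hjg
        have hjb := hsub hjg
        obtain ⟨-, hjf, hja⟩ := Finset.mem_filter.mp hjb
        exact ⟨hjb, by rw [if_neg hjf, hja, if_pos hjg]⟩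
    · intro h hh
      obtain ⟨-, hfoc, hcnt⟩ := Finset.mem_filter.mp hh
      refine Finset.prod_congr rfl fun j _ => ?_
      congr 1
      dsimp only
      by_cases hjf : j = focal
      · subst hjf; rw [if_pos rfl, hfoc]
      · rw [if_neg hjf]
        have hjb : j ∈ blk focal assign (assign j) :=
          Finset.mem_filter.mpr ⟨Finset.mem_univ _, hjf, rfl⟩
        by_cases hjt : h j = true
        · rw [if_pos (Finset.mem_filter.mpr ⟨hjb, hjt⟩), hjt]
        · have hnm : j ∉ Finset.filter (fun j => h j = true) (blk focal assign (assign j)) :=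
            fun c => hjt (Finset.mem_filter.mp c).2
          simp [hnm, Bool.eq_false_iff.mpr hjt]
  have step2 : ∀ g ∈ Fintype.piFinset (fun i => (blk focal assign i).powersetCard (x' i : ℕ)),
      (∏ j, w j (if j = focal then A' else if j ∈ g (assign j) then true else false))
      = w focal A' * ∏ i, ∏ u ∈ blk focal assign i,
          (if u ∈ g i then w u true else w u false) := by
    intro g hg
    rw [← Finset.mul_prod_erase Finset.univ _ (Finset.mem_univ focal), if_pos rfl]
    congr 1
    rw [← biUnion_blk focal assign,
      Finset.prod_biUnion (fun i _ i' _ hii' => blk_disjoint focal assign hii')]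
    refine Finset.prod_congr rfl fun i _ => Finset.prod_congr rfl fun u hu => ?_
    obtain ⟨-, huf, hua⟩ := Finset.mem_filter.mp hu
    rw [if_neg huf, hua]
    by_cases hug : u ∈ g i
    · rw [if_pos hug, if_pos hug]
    · rw [if_neg hug, if_neg hug]
  rw [step1, Finset.sum_congr rfl step2, ← Finset.mul_sum]
  congr 1
  exact (Finset.prod_univ_sum (fun i => (blk focal assign i).powersetCard (x' i : ℕ))
    (fun i gi => ∏ u ∈ blk focal assign i, if u ∈ gi then w u true else w u false)).symm

end StateClusteringAux

namespace StateClusteringAux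

variable {n m : ℕ}

def cnt (focal : Fin n) (assign : Fin n → Fin m) (h : FullState n) (i : Fin m) : ℕ :=
  ((blk focal assign i).filter fun j => h j = true).card

def cntFin (focal : Fin n) (assign : Fin n → Fin m) (ks : Fin m → ℕ)
    (hcard : ∀ i, (blk focal assign i).card = ks i) (h : FullState n) (i : Fin m) :
    Fin (ks i + 1) :=
  ⟨cnt focal assign h i, by
    have := Finset.card_filter_le (blk focal assign i) (fun j => h j = true)
    rw [hcard i] at this
    show ((blk focal assign i).filter fun j => h j = true).card < ks i + 1
    omega⟩

lemma cluster_eq_fiber (focal : Fin n) (assign : Fin n → Fin m) (ks : Fin m → ℕ)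
    (hcard : ∀ i, (blk focal assign i).card = ks i)
    (A : Bool) (x : (i : Fin m) → Fin (ks i + 1)) :
    clusterM focal assign ks A x = Finset.univ.filter
      (fun h => ((h focal, cntFin focal assign ks hcard h) : RStateM ks) = (A, x)) := by
  ext h
  simp only [clusterM, Finset.mem_filter, Finset.mem_univ, true_and, Prod.mk.injEq]
  constructor
  · rintro ⟨h1, h2⟩
    refine ⟨h1, funext fun i => Fin.ext ?_⟩
    show cnt focal assign h i = (x i : ℕ)
    rw [cnt, cnt_filter_eq]
    exact h2 i
  · rintro ⟨h1, h2⟩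
    refine ⟨h1, fun i => ?_⟩
    rw [← cnt_filter_eq]
    exact congrArg Fin.val (congrFun h2 i)

lemma one_step (ps : Fin m → Mem1) (i0 : Fin m) (hps : ∀ i, (ps i).valid)
    (focal : Fin n) (assign : Fin n → Fin m) (ks : Fin m → ℕ)
    (hcard : ∀ i, (blk focal assign i).card = ks i)
    (hassign : assign focal = i0) (h : FullState n)
    (A' : Bool) (x' : (i : Fin m) → Fin (ks i + 1)) :
    (∑ h' ∈ clusterM focal assign ks A' x', fullM (stratM ps assign) h h')
    = redMM ps ks i0 ((h focal, cntFin focal assign ks hcard h) : RStateM ks) (A', x') := by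
  have hS : ∑ i, (cntFin focal assign ks hcard h i : ℕ) = ∑ i, cnt focal assign h i := rfl
  have hN : nCoop h = (∑ i, cnt focal assign h i) + (if h focal then 1 else 0) := by
    rw [nCoop_eq focal assign h, Nat.add_comm]
    rfl
  have harg : nCoop h - (if h focal then 1 else 0) = ∑ i, cnt focal assign h i := by
    omega
  have hw : ∀ h' : FullState n, fullM (stratM ps assign) h h'
      = ∏ j, (fun (j : Fin n) (b : Bool) =>
          if b then (ps (assign j)).cond (h j) (nCoop h - if h j then 1 else 0)
          else 1 - (ps (assign j)).cond (h j) (nCoop h - if h j then 1 else 0)) j (h' j) :=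
    fun h' => rfl
  have hsc := sum_cluster focal assign ks A' x' (fun (j : Fin n) (b : Bool) =>
    if b then (ps (assign j)).cond (h j) (nCoop h - if h j then 1 else 0)
    else 1 - (ps (assign j)).cond (h j) (nCoop h - if h j then 1 else 0))
  rw [Finset.sum_congr rfl (fun h' _ => hw h'), hsc]
  simp only [if_true, Bool.false_eq_true, if_false]
  show _ = |1 - (if A' then (1:ℝ) else 0) -
      (ps i0).cond (h focal) (∑ i, (cntFin focal assign ks hcard h i : ℕ))| *
    ∏ i, transfer
      ((ps i).cond true ((∑ i', (cntFin focal assign ks hcard h i' : ℕ)) + (if h focal then 1 else 0) - 1))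
      ((ps i).cond false ((∑ i', (cntFin focal assign ks hcard h i' : ℕ)) + (if h focal then 1 else 0)))
      (cntFin focal assign ks hcard h i : ℕ) (ks i) (x' i : ℕ)
  have e2 : nCoop h = (∑ i', (cntFin focal assign ks hcard h i' : ℕ))
      + (if h focal then 1 else 0) := by
    rw [hS]; exact hN
  congr 1
  · rw [hassign]
    have hargs : nCoop h - (if h focal then 1 else 0)
        = ∑ i, (cntFin focal assign ks hcard h i : ℕ) := by rw [hS]; exact harg
    rw [hargs, abs_prob A' _ ((hps i0).2 (h focal) _).1 ((hps i0).2 (h focal) _).2]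
  · refine Finset.prod_congr rfl fun i _ => ?_
    have key : (∑ g ∈ (blk focal assign i).powersetCard (x' i : ℕ),
        ∏ u ∈ blk focal assign i,
          (if u ∈ g then (ps (assign u)).cond (h u) (nCoop h - if h u then 1 else 0)
           else 1 - (ps (assign u)).cond (h u) (nCoop h - if h u then 1 else 0)))
        = transfer ((ps i).cond true (nCoop h - 1)) ((ps i).cond false (nCoop h))
            ((blk focal assign i).filter (fun u => h u = true)).card
            (blk focal assign i).card (x' i : ℕ) := by
      rw [← sum_powersetCard_prod (blk focal assign i) (fun u => h u = true)
        ((ps i).cond true (nCoop h - 1)) ((ps i).cond false (nCoop h)) (x' i : ℕ)]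
      refine Finset.sum_congr rfl fun g hg => Finset.prod_congr rfl fun u hu => ?_
      obtain ⟨-, huf, hua⟩ := Finset.mem_filter.mp hu
      by_cases hut : h u = true <;> by_cases hug : u ∈ g <;>
        simp [hut, hug, hua]
    rw [key, hcard i]
    have e1 : nCoop h - 1 = (∑ i', (cntFin focal assign ks hcard h i' : ℕ))
        + (if h focal then 1 else 0) - 1 := by
      rw [e2]
    rw [e1, e2]
    rfl

lemma init_step (ps : Fin m → Mem1) (i0 : Fin m) (hps : ∀ i, (ps i).valid)
    (focal : Fin n) (assign : Fin n → Fin m) (ks : Fin m → ℕ)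
    (hcard : ∀ i, (blk focal assign i).card = ks i)
    (hassign : assign focal = i0)
    (A : Bool) (x : (i : Fin m) → Fin (ks i + 1)) :
    (∑ h ∈ clusterM focal assign ks A x, fullInit (stratM ps assign) h)
      = redInitM ps ks i0 (A, x) := by
  have hw : ∀ h : FullState n, fullInit (stratM ps assign) h
      = ∏ j, (fun (j : Fin n) (b : Bool) =>
          if b then (ps (assign j)).init else 1 - (ps (assign j)).init) j (h j) := by
    intro h
    refine Finset.prod_congr rfl fun j _ => ?_
    exact abs_prob (h j) ((ps (assign j)).init) ((hps (assign j)).1).1 ((hps (assign j)).1).2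
  have hsc := sum_cluster focal assign ks A x (fun (j : Fin n) (b : Bool) =>
    if b then (ps (assign j)).init else 1 - (ps (assign j)).init)
  rw [Finset.sum_congr rfl (fun h _ => hw h), hsc]
  simp only [if_true, Bool.false_eq_true, if_false]
  show _ = |1 - (if A then (1:ℝ) else 0) - (ps i0).init| *
    ∏ i, (((ks i).choose (x i : ℕ) : ℝ) * (ps i).init ^ (x i : ℕ) *
          (1 - (ps i).init) ^ (ks i - (x i : ℕ)))
  congr 1
  · rw [hassign, abs_prob A _ ((hps i0).1).1 ((hps i0).1).2]
  · refine Finset.prod_congr rfl fun i _ => ?_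
    have key : (∑ g ∈ (blk focal assign i).powersetCard (x i : ℕ),
        ∏ u ∈ blk focal assign i,
          (if u ∈ g then (ps (assign u)).init else 1 - (ps (assign u)).init))
        = (∑ g ∈ (blk focal assign i).powersetCard (x i : ℕ),
        ∏ u ∈ blk focal assign i,
          (if u ∈ g then (ps i).init else 1 - (ps i).init)) := by
      refine Finset.sum_congr rfl fun g hg => Finset.prod_congr rfl fun u hu => ?_
      obtain ⟨-, huf, hua⟩ := Finset.mem_filter.mp hu
      rw [hua]
    rw [key, sum_powersetCard_const, hcard i]

end StateClusteringAux

open StateClusteringAux in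
/-- For every round `t`, the clustered distribution after `t` steps of
the `m`-strategy reduced chain equals the aggregated full-chain distribution. -/
theorem state_clustering_t_step_m (n m : ℕ) (hn : 2 ≤ n) (hm : 1 ≤ m)
    (ps : Fin m → Mem1) (hps : ∀ i, (ps i).valid)
    (ks : Fin m → ℕ) (hks : ∑ i, ks i = n - 1) (i0 : Fin m)
    (focal : Fin n) (hfocal : (focal : ℕ) = 0)
    (assign : Fin n → Fin m) (hassign : assign focal = i0)
    (hcard : ∀ i, (Finset.univ.filter fun j => j ≠ focal ∧ assign j = i).card = ks i) :
    ∀ (t : ℕ) (A : Bool) (x : (i : Fin m) → Fin (ks i + 1)),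
      (redInitM ps ks i0 ᵥ* (redMM ps ks i0) ^ t) (A, x)
        = ∑ h ∈ clusterM focal assign ks A x,
            (fullInit (stratM ps assign) ᵥ* (fullM (stratM ps assign)) ^ t) h := by
  have hcard' : ∀ i, (blk focal assign i).card = ks i := hcard
  intro t
  induction t with
  | zero =>
    intro A x
    simp only [pow_zero, Matrix.vecMul_one]
    exact (init_step ps i0 hps focal assign ks hcard' hassign A x).symm
  | succ t ih =>
    intro A' x'
    rw [pow_succ, ← Matrix.vecMul_vecMul, pow_succ, ← Matrix.vecMul_vecMul]
    have hM : ∀ h' : FullState n,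
        ((fullInit (stratM ps assign) ᵥ* (fullM (stratM ps assign)) ^ t) ᵥ*
          fullM (stratM ps assign)) h'
        = ∑ h : FullState n, (fullInit (stratM ps assign) ᵥ* (fullM (stratM ps assign)) ^ t) h *
            fullM (stratM ps assign) h h' := by
      intro h'
      simp [Matrix.vecMul, dotProduct]
    have hR : ((redInitM ps ks i0 ᵥ* (redMM ps ks i0) ^ t) ᵥ* redMM ps ks i0) (A', x')
        = ∑ y : RStateM ks, (redInitM ps ks i0 ᵥ* (redMM ps ks i0) ^ t) y *
            redMM ps ks i0 y (A', x') := by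
      simp [Matrix.vecMul, dotProduct]
    rw [hR]
    have rhs1 : (∑ h' ∈ clusterM focal assign ks A' x',
        ((fullInit (stratM ps assign) ᵥ* (fullM (stratM ps assign)) ^ t) ᵥ*
          fullM (stratM ps assign)) h')
        = ∑ y : RStateM ks, (redInitM ps ks i0 ᵥ* (redMM ps ks i0) ^ t) y *
            redMM ps ks i0 y (A', x') := by
      rw [Finset.sum_congr rfl (fun h' _ => hM h'), Finset.sum_comm]
      have step : ∀ h : FullState n,
          (∑ h' ∈ clusterM focal assign ks A' x',
            (fullInit (stratM ps assign) ᵥ* (fullM (stratM ps assign)) ^ t) h *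
              fullM (stratM ps assign) h h')
          = (fullInit (stratM ps assign) ᵥ* (fullM (stratM ps assign)) ^ t) h *
              redMM ps ks i0 ((h focal, cntFin focal assign ks hcard' h) : RStateM ks) (A', x') := by
        intro h
        rw [← Finset.mul_sum, one_step ps i0 hps focal assign ks hcard' hassign h A' x']
      rw [Finset.sum_congr rfl (fun h _ => step h)]
      rw [← Finset.sum_fiberwise Finset.univ
        (fun h : FullState n => ((h focal, cntFin focal assign ks hcard' h) : RStateM ks))
        (fun h : FullState n =>
          (fullInit (stratM ps assign) ᵥ* (fullM (stratM ps assign)) ^ t) h *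
            redMM ps ks i0 ((h focal, cntFin focal assign ks hcard' h) : RStateM ks) (A', x'))]
      refine Finset.sum_congr rfl fun y _ => ?_
      obtain ⟨A0, x0⟩ := y
      have hconst : ∀ h ∈ Finset.univ.filter (fun h : FullState n =>
          ((h focal, cntFin focal assign ks hcard' h) : RStateM ks) = (A0, x0)),
          (fullInit (stratM ps assign) ᵥ* (fullM (stratM ps assign)) ^ t) h *
            redMM ps ks i0 ((h focal, cntFin focal assign ks hcard' h) : RStateM ks) (A', x')
          = (fullInit (stratM ps assign) ᵥ* (fullM (stratM ps assign)) ^ t) h *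
            redMM ps ks i0 (A0, x0) (A', x') := by
        intro h hh
        rw [(Finset.mem_filter.mp hh).2]
      rw [Finset.sum_congr rfl hconst, ← Finset.sum_mul,
        ← cluster_eq_fiber focal assign ks hcard' A0 x0, ← ih A0 x0]
    rw [rhs1]
end
end
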